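/- arXiv:math/0504543 — 7 statements merged into one kernel-verified Lean document; each statement's English description precedes it below -/
import Mathlib

section
/- With k ∈ C^{n-1} extended n-periodically (k_0 = 0 and k_j = k_i when j ≡ i mod n, 0 ≤ i ≤ n−1), let d_k = ∂ − y^{-1}∑_{i=1}^{n-1} k_i e_i and θ = y∂. Then for every p ≥ 1: d_k^p y^p = ∏_{i=1}^{p}(θ + i − ∑_{j=0}^{n-1} k_{i+j} e_j) and y^p d_k^p = ∏_{i=0}^{p-1}(θ − i − ∑_{j=0}^{n-1} k_{j−i} e_j), as elements of Q = C[∂, y^{±1}]*Γ. -/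
open Finset

noncomputable def omegaRoot (n : ℕ) : ℂ := Complex.exp (2 * Real.pi * Complex.I / n)

/-! Let `L s = θ + s - ∑ⱼ k (s + j) eⱼ` (`eulerFactor`). From `y eⱼ = eⱼ₊₁ y`, the periodicity
of `k` and of `e`, and `θ y = y (θ + 1)`, one gets `L s * y = y * L (s + 1)`; moreover `d_k y = L 1`
and `y d_k = L 0`. Pushing `y` through the factors telescopes `d_kᵖ yᵖ` into `L 1 ⋯ L p` and
`yᵖ d_kᵖ` into `L (1 - p) ⋯ L 0`. The latter product may be reordered: since the twists of `y` and
`∂` by `γ` cancel, `θ` commutes with `γ`, so all `L s` lie in the commutative subalgebra generated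
by `θ` and `γ`. -/

theorem Finset.sum_range_succ_eq_sum_range_of_eq {M : Type*} [AddCancelCommMonoid M]
    (f : ℕ → M) {n : ℕ} (h : f n = f 0) :
    ∑ j ∈ range n, f (j + 1) = ∑ j ∈ range n, f j :=
  add_right_cancel (b := f 0) (by rw [← sum_range_succ', sum_range_succ, h])

section ShiftFamily

variable {Q : Type*} [Monoid Q] {x y : Q} {L : ℤ → Q}

theorem mul_pow_eq_pow_mul_of_mul_eq_mul_succ (hL : ∀ s, L s * y = y * L (s + 1))
    (s : ℤ) (q : ℕ) : L s * y ^ q = y ^ q * L (s + q) := by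
  induction q generalizing s with
  | zero => simp
  | succ q ih =>
    rw [pow_succ', ← mul_assoc, hL, mul_assoc, ih, ← mul_assoc, ← pow_succ', add_assoc]
    push_cast
    rw [add_comm 1]

theorem pow_mul_pow_eq_prod_of_mul_eq_mul_succ (hL : ∀ s, L s * y = y * L (s + 1))
    (hxy : x * y = L 1) (p : ℕ) :
    x ^ p * y ^ p = ((List.range p).map fun i : ℕ => L (i + 1)).prod := by
  induction p with
  | zero => simp
  | succ p ih =>
    rw [pow_succ x, pow_succ' y, mul_assoc, ← mul_assoc x, hxy,
      mul_pow_eq_pow_mul_of_mul_eq_mul_succ hL, ← mul_assoc, ih, List.prod_range_succ, add_comm]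

theorem pow_mul_pow_eq_prod_neg_of_mul_eq_mul_succ (hL : ∀ s, L s * y = y * L (s + 1))
    (hcomm : ∀ s t, Commute (L s) (L t)) (hyx : y * x = L 0) (p : ℕ) :
    y ^ p * x ^ p = ((List.range p).map fun i : ℕ => L (-i)).prod := by
  induction p with
  | zero => simp
  | succ p ih =>
    have hpull : y ^ p * L 0 = L (-p) * y ^ p := by
      simpa using (mul_pow_eq_pow_mul_of_mul_eq_mul_succ hL (-p) p).symm
    have hcomm_prod : Commute (L (-p)) ((List.range p).map fun i : ℕ => L (-i)).prod :=
      Commute.list_prod_right _ _ fun _ hz => by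
        obtain ⟨i, -, rfl⟩ := List.mem_map.mp hz
        exact hcomm _ _
    rw [pow_succ y, pow_succ' x, mul_assoc, ← mul_assoc y, hyx, ← mul_assoc, hpull, mul_assoc,
      ih, hcomm_prod.eq, List.prod_range_succ]

end ShiftFamily

theorem Algebra.commute_of_mem_adjoin_pair {R A : Type*} [CommSemiring R] [Semiring A]
    [Algebra R A] {a b x z : A} (hab : Commute a b) (hx : x ∈ Algebra.adjoin R {a, b})
    (hz : z ∈ Algebra.adjoin R {a, b}) : Commute x z := by
  have hpair : ∀ c ∈ ({a, b} : Set A), ∀ c' ∈ ({a, b} : Set A), Commute c c' := by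
    rintro c (rfl | rfl) c' (rfl | rfl) <;> first | rfl | exact hab | exact hab.symm
  refine Algebra.commute_of_mem_adjoin_of_forall_mem_commute hz fun c hc => ?_
  exact (Algebra.commute_of_mem_adjoin_of_forall_mem_commute hx (hpair c hc)).symm

theorem commute_mul_of_smul_commutator {Q : Type*} [Ring Q] [Algebra ℂ Q] {y d γ : Q} {c : ℂ}
    (hc : c ≠ 0) (hyγ : y * γ = c • (γ * y)) (hγd : γ * d = c • (d * γ)) :
    Commute (y * d) γ := by
  refine smul_right_injective Q hc ?_
  calc c • (y * d * γ) = y * (c • (d * γ)) := by rw [mul_smul_comm, mul_assoc]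
    _ = c • (γ * (y * d)) := by rw [← hγd, ← mul_assoc, hyγ, smul_mul_assoc, mul_assoc]

theorem omegaRoot_pow_self (n : ℕ) : omegaRoot n ^ n = 1 := by
  rcases eq_or_ne n 0 with rfl | hn
  · exact pow_zero _
  · exact (Complex.isPrimitiveRoot_exp n hn).pow_eq_one

section CyclicIdempotent

variable {Q : Type*} [Ring Q] [Algebra ℂ Q] {n : ℕ} {y γ : Q}

noncomputable def cyclicIdempotent (n : ℕ) (γ : Q) (i : ℕ) : Q :=
  (n : ℂ)⁻¹ • ∑ j ∈ range n, (omegaRoot n ^ i • γ) ^ j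

theorem mul_cyclicIdempotent (hyγ : y * γ = omegaRoot n • (γ * y)) (i : ℕ) :
    y * cyclicIdempotent n γ i = cyclicIdempotent n γ (i + 1) * y := by
  have hstep : SemiconjBy y (omegaRoot n ^ i • γ) (omegaRoot n ^ (i + 1) • γ) := by
    rw [SemiconjBy, mul_smul_comm, hyγ, smul_smul, smul_mul_assoc, pow_succ]
  simp only [cyclicIdempotent, mul_smul_comm, smul_mul_assoc, mul_sum, sum_mul,
    (hstep.pow_right _).eq]

theorem cyclicIdempotent_self : cyclicIdempotent n γ n = cyclicIdempotent n γ 0 := by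
  simp only [cyclicIdempotent, omegaRoot_pow_self, pow_zero]

theorem cyclicIdempotent_mem {S : Subalgebra ℂ Q} (hγ : γ ∈ S) (i : ℕ) :
    cyclicIdempotent n γ i ∈ S :=
  S.smul_mem (S.sum_mem fun _ _ => S.pow_mem (S.smul_mem hγ _) _) _

end CyclicIdempotent

section EulerFactor

variable {Q : Type*} [Ring Q] [Algebra ℂ Q] {n : ℕ} {k : ℤ → ℂ} {e : ℕ → Q} {y θ : Q}

def twistSum (n : ℕ) (k : ℤ → ℂ) (e : ℕ → Q) (s : ℤ) : Q :=
  ∑ j ∈ range n, k (s + j) • e j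

def eulerFactor (n : ℕ) (k : ℤ → ℂ) (e : ℕ → Q) (θ : Q) (s : ℤ) : Q :=
  θ + (s : ℂ) • (1 : Q) - twistSum n k e s

theorem sum_Icc_eq_twistSum_zero (hk0 : k 0 = 0) :
    ∑ i ∈ Icc 1 (n - 1), k i • e i = twistSum n k e 0 := by
  simp only [twistSum, zero_add]
  refine sum_subset (fun i hi => ?_) fun i hi hi' => ?_
  · simp only [mem_Icc, mem_range] at hi ⊢
    omega
  · simp only [mem_Icc, mem_range, not_and, not_le] at hi hi'
    obtain rfl : i = 0 := by omega
    simp [hk0]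

theorem twistSum_mul (hye : ∀ i, y * e i = e (i + 1) * y) (hen : e n = e 0)
    (hk : ∀ j : ℤ, k (j + n) = k j) (s : ℤ) :
    twistSum n k e s * y = y * twistSum n k e (s + 1) := by
  have hper : k (s + (n : ℕ)) • e n = k (s + ((0 : ℕ) : ℤ)) • e 0 := by simp [hk, hen]
  rw [twistSum, twistSum, ← sum_range_succ_eq_sum_range_of_eq (fun j => k (s + j) • e j) hper,
    mul_sum, sum_mul]
  refine sum_congr rfl fun j _ => ?_
  rw [mul_smul_comm, hye, smul_mul_assoc]
  push_cast
  ring_nf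

theorem eulerFactor_mul (hθy : θ * y = y * (θ + 1))
    (hK : ∀ s, twistSum n k e s * y = y * twistSum n k e (s + 1)) (s : ℤ) :
    eulerFactor n k e θ s * y = y * eulerFactor n k e θ (s + 1) := by
  simp only [eulerFactor, sub_mul, add_mul, hθy, hK, smul_mul_assoc, one_mul, mul_sub, mul_add,
    mul_smul_comm, mul_one]
  push_cast
  rw [add_smul, one_smul]
  abel

theorem eulerFactor_mem {S : Subalgebra ℂ Q} (hθ : θ ∈ S) (he : ∀ i, e i ∈ S) (s : ℤ) :
    eulerFactor n k e θ s ∈ S :=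
  S.sub_mem (S.add_mem hθ (S.smul_mem S.one_mem _))
    (S.sum_mem fun j _ => S.smul_mem (he j) _)

end EulerFactor

theorem statement1_general {Q : Type*} [Ring Q] [Algebra ℂ Q] (n : ℕ)
    (y yinv d γ : Q)
    (hy : y * yinv = 1) (hy' : yinv * y = 1)
    (hWeyl : d * y - y * d = 1)
    (hyγ : y * γ = omegaRoot n • (γ * y))
    (hγd : γ * d = omegaRoot n • (d * γ))
    (e : ℕ → Q)
    (he : ∀ i, e i = (n : ℂ)⁻¹ • ∑ j ∈ range n, ((omegaRoot n) ^ i • γ) ^ j)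
    (k : ℤ → ℂ) (hk0 : k 0 = 0) (hkper : ∀ j : ℤ, k (j + n) = k j)
    (dk θ : Q)
    (hdk : dk = d - yinv * ∑ i ∈ Icc 1 (n - 1), k i • e i)
    (hθ : θ = y * d) :
    ∀ p : ℕ, 1 ≤ p →
      (dk ^ p * y ^ p =
        ((List.range p).map (fun (i : ℕ) =>
          θ + (((i : ℂ) + 1) • (1 : Q)) -
            ∑ j ∈ range n, k ((i : ℤ) + 1 + (j : ℤ)) • e j)).prod)
      ∧ (y ^ p * dk ^ p =
        ((List.range p).map (fun (i : ℕ) =>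
          θ - ((i : ℂ) • (1 : Q)) -
            ∑ j ∈ range n, k ((j : ℤ) - (i : ℤ)) • e j)).prod) := by
  intro p _
  obtain rfl : e = cyclicIdempotent n γ := funext he
  rw [sum_Icc_eq_twistSum_zero hk0] at hdk
  subst hdk hθ
  set L := eulerFactor n k (cyclicIdempotent n γ) (y * d)
  have hθy : y * d * y = y * (y * d + 1) := by
    rw [mul_assoc, ← hWeyl]
    noncomm_ring
  have hK := twistSum_mul (mul_cyclicIdempotent hyγ) cyclicIdempotent_self hkper
  have hshift : ∀ s, L s * y = y * L (s + 1) := eulerFactor_mul hθy hK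
  have hmem : ∀ s, L s ∈ Algebra.adjoin ℂ {y * d, γ} :=
    eulerFactor_mem (Algebra.subset_adjoin (by simp))
      (cyclicIdempotent_mem (Algebra.subset_adjoin (by simp)))
  have hcomm : ∀ s t, Commute (L s) (L t) := fun s t =>
    Algebra.commute_of_mem_adjoin_pair
      (commute_mul_of_smul_commutator (Complex.exp_ne_zero _) hyγ hγd) (hmem s) (hmem t)
  constructor
  · have hxy : (d - yinv * twistSum n k (cyclicIdempotent n γ) 0) * y = L 1 := by
      rw [sub_mul, mul_assoc, hK, ← mul_assoc yinv, hy', one_mul, sub_eq_iff_eq_add.mp hWeyl]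
      simp [L, eulerFactor, add_comm]
    rw [pow_mul_pow_eq_prod_of_mul_eq_mul_succ hshift hxy]
    simp only [L, eulerFactor, twistSum]
    push_cast
    rfl
  · have hyx : y * (d - yinv * twistSum n k (cyclicIdempotent n γ) 0) = L 0 := by
      rw [mul_sub, ← mul_assoc, hy, one_mul]
      simp [L, eulerFactor]
    rw [pow_mul_pow_eq_prod_neg_of_mul_eq_mul_succ hshift hcomm hyx]
    simp only [L, eulerFactor, twistSum, Int.cast_neg, Int.cast_natCast, neg_smul,
      ← sub_eq_add_neg, neg_add_eq_sub]

/-- In `Q = ℂ[∂, y^{±1}] * Γ` (Γ cyclic of order n, `yγ = ωγy`, `γ∂ = ω∂γ`),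
with `k ∈ ℂ^{n-1}` extended `n`-periodically (`k 0 = 0`),
`d_k = ∂ − y^{-1} ∑_{i=1}^{n-1} k_i e_i` and `θ = y∂`, one has for all `p ≥ 1`:
`d_k^p y^p = ∏_{i=1}^{p} (θ + i − ∑_{j=0}^{n-1} k_{i+j} e_j)` and
`y^p d_k^p = ∏_{i=0}^{p-1} (θ − i − ∑_{j=0}^{n-1} k_{j−i} e_j)`
(the factors pairwise commute; the product is taken in the listed order). -/
theorem statement1 {Q : Type*} [Ring Q] [Algebra ℂ Q] (n : ℕ) (hn : 0 < n)
    (y yinv d γ : Q)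
    (hy : y * yinv = 1) (hy' : yinv * y = 1)
    (hWeyl : d * y - y * d = 1)
    (hγ : γ ^ n = 1)
    (hyγ : y * γ = omegaRoot n • (γ * y))
    (hγd : γ * d = omegaRoot n • (d * γ))
    (e : ℕ → Q)
    (he : ∀ i, e i = (n : ℂ)⁻¹ • ∑ j ∈ range n, ((omegaRoot n) ^ i • γ) ^ j)
    (k : ℤ → ℂ) (hk0 : k 0 = 0) (hkper : ∀ j : ℤ, k (j + n) = k j)
    (dk θ : Q)
    (hdk : dk = d - yinv * ∑ i ∈ Icc 1 (n - 1), k i • e i)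
    (hθ : θ = y * d) :
    ∀ p : ℕ, 1 ≤ p →
      (dk ^ p * y ^ p =
        ((List.range p).map (fun (i : ℕ) =>
          θ + (((i : ℂ) + 1) • (1 : Q)) -
            ∑ j ∈ range n, k ((i : ℤ) + 1 + (j : ℤ)) • e j)).prod)
      ∧ (y ^ p * dk ^ p =
        ((List.range p).map (fun (i : ℕ) =>
          θ - ((i : ℂ) • (1 : Q)) -
            ∑ j ∈ range n, k ((j : ℤ) - (i : ℤ)) • e j)).prod) :=
  statement1_general n y yinv d γ hy hy' hWeyl hyγ hγd e he k hk0 hkper dk θ hdk hθ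
end

section
/- In Q = C[∂, y^{±1}]*Γ one has d_k y − y d_k = 1 + ∑_{j=0}^{n-1}(k_j − k_{j+1}) e_j, where indices are read mod n and k_0 = k_n = 0. -/
/-! Conjugation by `y` shifts the idempotents, `y⁻¹ e_{j+1} y = e_j`, because
`γ^j y = ω^{-j} y γ^j`. Hence `y⁻¹ (∑ k_j e_j) y = ∑ k_{j+1} e_j` (the boundary terms
vanish as `k_0 = k_n = 0`), and `[d - y⁻¹ S, y] = [d, y] + S - y⁻¹ S y` with
`S = ∑ k_j e_j` gives the formula. -/

open Finset

section Commutation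

variable {R A : Type*} [CommSemiring R] [Semiring A] [Algebra R A] {y g : A} {c : R}

theorem mul_pow_eq_smul_pow_mul (h : y * g = c • (g * y)) (j : ℕ) :
    y * g ^ j = c ^ j • (g ^ j * y) := by
  induction j with
  | zero => simp
  | succ j ih =>
    rw [pow_succ, ← mul_assoc, ih, smul_mul_assoc, mul_assoc, h, mul_smul_comm, smul_smul,
      ← mul_assoc, pow_succ]

theorem smul_pow_mul_eq_mul_smul_pow (h : y * g = c • (g * y)) (a : R) (j : ℕ) :
    ((c * a) • g) ^ j * y = y * (a • g) ^ j := by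
  rw [smul_pow, smul_pow, mul_smul_comm, mul_pow_eq_smul_pow_mul h, smul_smul, smul_mul_assoc,
    mul_pow, mul_comm]

theorem smul_sum_smul_pow_mul_eq_mul (h : y * g = c • (g * y)) (a r : R) (n : ℕ) :
    (r • ∑ j ∈ range n, ((c * a) • g) ^ j) * y =
      y * (r • ∑ j ∈ range n, (a • g) ^ j) := by
  rw [smul_mul_assoc, mul_smul_comm, sum_mul, mul_sum]
  simp only [smul_pow_mul_eq_mul_smul_pow h]

end Commutation

theorem commutator_sub_inv_mul_eq {A : Type*} [Ring A] {y yinv d S T : A}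
    (hy : y * yinv = 1) (hy' : yinv * y = 1) (hST : S * y = y * T) :
    (d - yinv * S) * y - y * (d - yinv * S) = (d * y - y * d) + (S - T) := by
  have : yinv * S * y = T := by rw [mul_assoc, hST, ← mul_assoc, hy', one_mul]
  rw [sub_mul, mul_sub, this, ← mul_assoc, hy, one_mul]
  abel

theorem sum_range_succ_eq_sum_range {M : Type*} [AddCommGroup M] {f : ℕ → M} {n : ℕ}
    (h : f n = f 0) : ∑ i ∈ range n, f (i + 1) = ∑ i ∈ range n, f i := by
  rw [← sub_eq_zero, ← sum_sub_distrib, sum_range_sub, h, sub_self]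

theorem sum_Icc_one_pred_eq_sum_range {M : Type*} [AddCommMonoid M] {f : ℕ → M} (n : ℕ)
    (h : f 0 = 0) : ∑ i ∈ Icc 1 (n - 1), f i = ∑ i ∈ range n, f i := by
  refine sum_subset (fun i hi ↦ ?_) (fun i hi hi' ↦ ?_)
  · simp only [mem_Icc] at hi
    exact mem_range.2 (by omega)
  · obtain rfl : i = 0 := by simp only [mem_Icc, mem_range] at hi hi'; omega
    exact h

theorem statement3_general {Q : Type*} [Ring Q] [Algebra ℂ Q] (n : ℕ)
    (y yinv d γ : Q)
    (hy : y * yinv = 1) (hy' : yinv * y = 1)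
    (hWeyl : d * y - y * d = 1)
    (hyγ : y * γ = omegaRoot n • (γ * y))
    (e : ℕ → Q)
    (he : ∀ i, e i = (n : ℂ)⁻¹ • ∑ j ∈ range n, ((omegaRoot n) ^ i • γ) ^ j)
    (k : ℤ → ℂ) (hk0 : k 0 = 0) (hkper : ∀ j : ℤ, k (j + n) = k j)
    (dk : Q)
    (hdk : dk = d - yinv * ∑ i ∈ Icc 1 (n - 1), k i • e i) :
    dk * y - y * dk = 1 + ∑ j ∈ range n, (k j - k ((j : ℤ) + 1)) • e j := by
  have he_succ_mul (i : ℕ) : e (i + 1) * y = y * e i := by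
    rw [he, he, pow_succ', smul_sum_smul_pow_mul_eq_mul hyγ]
  have hkn : k n = 0 := by simpa [hk0] using hkper 0
  have hST :
      (∑ j ∈ range n, k j • e j) * y = y * ∑ j ∈ range n, k ((j : ℤ) + 1) • e j := by
    calc (∑ j ∈ range n, k j • e j) * y
        = (∑ j ∈ range n, k ((j + 1 : ℕ) : ℤ) • e (j + 1)) * y :=
          congrArg (· * y) (sum_range_succ_eq_sum_range (by simp [hk0, hkn])).symm
      _ = y * ∑ j ∈ range n, k ((j : ℤ) + 1) • e j := by
          simp only [sum_mul, mul_sum, smul_mul_assoc, mul_smul_comm, he_succ_mul, Nat.cast_succ]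
  rw [hdk, sum_Icc_one_pred_eq_sum_range n (by simp [hk0]),
    commutator_sub_inv_mul_eq hy hy' hST, hWeyl, ← sum_sub_distrib]
  simp only [sub_smul]

/-- In `Q = ℂ[∂, y^{±1}] * Γ` one has
`d_k y − y d_k = 1 + ∑_{j=0}^{n-1} (k_j − k_{j+1}) e_j`,
indices read mod `n` and `k_0 = k_n = 0`. -/
theorem statement3 {Q : Type*} [Ring Q] [Algebra ℂ Q] (n : ℕ) (hn : 0 < n)
    (y yinv d γ : Q)
    (hy : y * yinv = 1) (hy' : yinv * y = 1)
    (hWeyl : d * y - y * d = 1)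
    (hγ : γ ^ n = 1)
    (hyγ : y * γ = omegaRoot n • (γ * y))
    (hγd : γ * d = omegaRoot n • (d * γ))
    (e : ℕ → Q)
    (he : ∀ i, e i = (n : ℂ)⁻¹ • ∑ j ∈ range n, ((omegaRoot n) ^ i • γ) ^ j)
    (k : ℤ → ℂ) (hk0 : k 0 = 0) (hkper : ∀ j : ℤ, k (j + n) = k j)
    (dk : Q)
    (hdk : dk = d - yinv * ∑ i ∈ Icc 1 (n - 1), k i • e i) :
    dk * y - y * dk = 1 + ∑ j ∈ range n, (k j - k ((j : ℤ) + 1)) • e j :=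
  statement3_general n y yinv d γ hy hy' hWeyl hyγ e he k hk0 hkper dk hdk
end

section
/- Fix 1 ≤ p ≤ n−1 and set k' = k + w_p, where w_p = n∑_{i=1}^{p} v_i (v_i the standard basis of C^{n-1}). Then y^p e H_k e = e_p H_{k'} e_p y^p inside Q = C[∂, y^{±1}]*Γ, where e = e_0. -/
/-!
Conjugation by `y^p` carries `e₀ H_k e₀` onto `e_p H_m e_p` with `m_j = k_{j-p} + p`, so it is
enough to compare the corners `e_p H_κ e_p` of the algebras generated by Dunkl elements
`δ_κ = ∂ - y⁻¹ ∑ κ_j e_j`. With `θ = y∂` one has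
`δ_κ^b e_x = y⁻ᵇ ∏_{s<b} (θ - κ(x-s) - s) e_x`, so `δ_κ^n e_p` only depends on the multiset
`{κ(p-s) + s | s < n}`, which is the same for `m` and `k'`. The corner `e_p H_κ e_p` is spanned
by the monomials `y^a δ_κ^b e_p` with `a ≡ b (mod n)`. As `y δ_κ - y δ_κ'` is a combination of
idempotents, every balanced monomial `y^b δ_κ^b` lies in `H_κ'`; trading `δ_κ^{nq} e_p` for
`δ_κ'^{nq} e_p` handles the case `a < b`.
-/

open Finset

theorem pow_mul_eq_of_forall_mul_eq {M A : Type*} [Monoid M] [AddMonoid A] {a : M} {f : A → M}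
    {c : A} (h : ∀ x, a * f x = f (x + c) * a) (m : ℕ) (x : A) :
    a ^ m * f x = f (x + m • c) * a ^ m := by
  induction m generalizing x with
  | zero => simp
  | succ m ih =>
    rw [pow_succ', mul_assoc, ih, ← mul_assoc, h, mul_assoc, ← pow_succ', succ_nsmul, add_assoc]

def corner {R : Type*} [Mul R] (e : R) (S : Set R) : Set R := (fun h => e * h * e) '' S

theorem mul_mem_corner_of_commute {R : Type*} [Semigroup R] {e w : R} {S : Set R}
    (he : IsIdempotentElem e) (hw : w ∈ S) (hc : Commute w e) : w * e ∈ corner e S :=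
  ⟨w, hw, show e * w * e = w * e by rw [← hc.eq, mul_assoc, he.eq]⟩

theorem Algebra.adjoin_le_span_of_mul_mem {K A : Type*} [CommSemiring K] [Semiring A]
    [Algebra K A] {s X : Set A} (h1 : 1 ∈ Submodule.span K X)
    (hmul : ∀ g ∈ s, ∀ z ∈ X, g * z ∈ Submodule.span K X) :
    Subalgebra.toSubmodule (Algebra.adjoin K s) ≤ Submodule.span K X := by
  have hleft : ∀ g ∈ Algebra.adjoin K s, ∀ z ∈ Submodule.span K X,
      g * z ∈ Submodule.span K X := by
    intro g hg
    induction hg using Algebra.adjoin_induction with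
    | mem g hg =>
      intro z hz
      induction hz using Submodule.span_induction with
      | mem z hz => exact hmul g hg z hz
      | zero => simp
      | add z z' _ _ hz hz' => rw [mul_add]; exact add_mem hz hz'
      | smul r z _ hz => rw [mul_smul_comm]; exact Submodule.smul_mem _ r hz
    | algebraMap r => intro z hz; rw [← Algebra.smul_def]; exact Submodule.smul_mem _ r hz
    | add g g' _ _ hg hg' => intro z hz; rw [add_mul]; exact add_mem (hg z hz) (hg' z hz)
    | mul g g' _ _ hg hg' => intro z hz; rw [mul_assoc]; exact hg _ (hg' z hz)
  intro g hg
  simpa using hleft g hg 1 h1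

@[to_additive]
theorem prod_range_eq_prod_zmod_val {M : Type*} [CommMonoid M] {n : ℕ} [NeZero n]
    (f : ℕ → M) : ∏ i ∈ range n, f i = ∏ x : ZMod n, f x.val :=
  prod_nbij' (fun i => (i : ZMod n)) (fun x => x.val) (by simp) (by simp [ZMod.val_lt])
    (fun i hi => ZMod.val_cast_of_lt (mem_range.1 hi)) (by simp)
    (fun i hi => by rw [ZMod.val_cast_of_lt (mem_range.1 hi)])

theorem sum_Icc_eq_sum_zmod_val {M : Type*} [AddCommMonoid M] {n : ℕ} [NeZero n] (f : ℕ → M)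
    (hf : f 0 = 0) : ∑ i ∈ Icc 1 (n - 1), f i = ∑ x : ZMod n, f x.val := by
  have h : range n = insert 0 (Icc 1 (n - 1)) := by
    ext i
    simp only [mem_range, mem_insert, mem_Icc]
    have := NeZero.pos n
    omega
  rw [← sum_range_eq_sum_zmod_val, h, sum_insert (by simp), hf, zero_add]

theorem IsPrimitiveRoot.pow_val_natCast {M : Type*} [CommMonoid M] {ζ : M} {n : ℕ}
    (hζ : IsPrimitiveRoot ζ n) (a : ℕ) : ζ ^ (a : ZMod n).val = ζ ^ a := by
  rw [ZMod.val_natCast, hζ.eq_orderOf, pow_mod_orderOf]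

theorem IsPrimitiveRoot.mul_pow_val {M : Type*} [CommMonoid M] {ζ : M} {n : ℕ} [NeZero n]
    (hζ : IsPrimitiveRoot ζ n) (x : ZMod n) : ζ * ζ ^ x.val = ζ ^ (x + 1).val := by
  rw [← pow_succ', ← hζ.pow_val_natCast, Nat.cast_succ, ZMod.natCast_zmod_val]

theorem IsPrimitiveRoot.pow_pow_eq_one {M : Type*} [CommMonoid M] {ζ : M} {n : ℕ}
    (hζ : IsPrimitiveRoot ζ n) (a : ℕ) : (ζ ^ a) ^ n = 1 := by
  rw [pow_right_comm, hζ.pow_eq_one, one_pow]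

theorem geom_sum_eq_zero_of_pow_eq_one {K : Type*} [Field K] {n : ℕ} {r : K} (hr : r ^ n = 1)
    (hr1 : r ≠ 1) : ∑ j ∈ range n, r ^ j = 0 := by
  rw [geom_sum_eq hr1, hr, sub_self, zero_div]

section RootIdempotent

variable {K Q : Type*} [Field K] [Ring Q] [Algebra K Q] {n : ℕ} {g : Q}

variable (n) in
noncomputable def rootIdem (g : Q) (z : K) : Q := (n : K)⁻¹ • ∑ j ∈ range n, (z • g) ^ j

theorem smul_mul_rootIdem (hg : g ^ n = 1) {z : K} (hz : z ^ n = 1) :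
    (z • g) * rootIdem n g z = rootIdem n g z := by
  have h := mul_geom_sum (z • g) n
  rw [smul_pow, hz, hg, one_smul, sub_self, sub_mul, one_mul, sub_eq_zero] at h
  rw [rootIdem, mul_smul_comm, h]

theorem pow_mul_rootIdem [NeZero n] (hg : g ^ n = 1) (w : K) {z : K} (hz : z ^ n = 1)
    (j : ℕ) : (w • g) ^ j * rootIdem n g z = (w / z) ^ j • rootIdem n g z := by
  have hz0 : z ≠ 0 := (IsUnit.of_pow_eq_one hz (NeZero.ne n)).ne_zero
  have hzj : (z • g) ^ j * rootIdem n g z = rootIdem n g z := by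
    induction j with
    | zero => simp
    | succ j ih => rw [pow_succ, mul_assoc, smul_mul_rootIdem hg hz, ih]
  rw [smul_pow, ← div_mul_cancel₀ (w ^ j) (pow_ne_zero j hz0), ← smul_smul, ← smul_pow,
    ← div_pow, smul_mul_assoc, hzj]

theorem rootIdem_mul_rootIdem [NeZero n] (hg : g ^ n = 1) (w : K) {z : K} (hz : z ^ n = 1) :
    rootIdem n g w * rootIdem n g z
      = ((n : K)⁻¹ * ∑ j ∈ range n, (w / z) ^ j) • rootIdem n g z := by
  rw [rootIdem, smul_mul_assoc, sum_mul]
  simp only [pow_mul_rootIdem hg w hz, ← sum_smul, smul_smul]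

theorem rootIdem_mul_self [NeZero n] (hn : (n : K) ≠ 0) (hg : g ^ n = 1) {z : K}
    (hz : z ^ n = 1) : rootIdem n g z * rootIdem n g z = rootIdem n g z := by
  have hz0 : z ≠ 0 := (IsUnit.of_pow_eq_one hz (NeZero.ne n)).ne_zero
  rw [rootIdem_mul_rootIdem hg z hz, div_self hz0]
  simp [hn]

theorem rootIdem_mul_rootIdem_of_ne [NeZero n] (hg : g ^ n = 1) {w z : K} (hw : w ^ n = 1)
    (hz : z ^ n = 1) (hwz : w ≠ z) : rootIdem n g w * rootIdem n g z = 0 := by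
  have hz0 : z ≠ 0 := (IsUnit.of_pow_eq_one hz (NeZero.ne n)).ne_zero
  rw [rootIdem_mul_rootIdem hg w hz,
    geom_sum_eq_zero_of_pow_eq_one (by rw [div_pow, hw, hz, div_one])
      (by rwa [Ne, div_eq_one_iff_eq hz0]), mul_zero, zero_smul]

theorem sum_rootIdem [NeZero n] {ζ : K} (hζ : IsPrimitiveRoot ζ n) :
    ∑ x : ZMod n, rootIdem n g (ζ ^ x.val) = 1 := by
  have hn : (n : K) ≠ 0 := hζ.neZero'.out
  rw [← sum_range_eq_sum_zmod_val fun i => rootIdem n g (ζ ^ i)]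
  simp only [rootIdem, ← smul_sum]
  rw [sum_comm]
  simp only [smul_pow, ← sum_smul]
  rw [sum_eq_single 0 (fun j hj hj0 => by
    rw [sum_congr rfl fun i _ => pow_right_comm ζ i j,
      geom_sum_eq_zero_of_pow_eq_one (hζ.pow_pow_eq_one j)
        (hζ.pow_ne_one_of_pos_of_lt hj0 (mem_range.1 hj)), zero_smul])
    (by simp [NeZero.pos n])]
  simp [hn]

theorem y_mul_rootIdem {ζ : K} {y : Q} (hyg : y * g = ζ • (g * y)) (z : K) :
    y * rootIdem n g z = rootIdem n g (ζ * z) * y := by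
  have h : SemiconjBy y (z • g) ((ζ * z) • g) := by
    rw [SemiconjBy, mul_smul_comm, hyg, smul_smul, mul_comm, smul_mul_assoc]
  rw [rootIdem, rootIdem, mul_smul_comm, smul_mul_assoc, mul_sum, sum_mul]
  simp only [(h.pow_right _).eq]

theorem rootIdem_mul {ζ : K} {d : Q} (hgd : g * d = ζ • (d * g)) (z : K) :
    rootIdem n g z * d = d * rootIdem n g (ζ * z) := by
  have h : SemiconjBy d ((ζ * z) • g) (z • g) := by
    rw [SemiconjBy, smul_mul_assoc, hgd, smul_smul, mul_comm, mul_smul_comm]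
  rw [rootIdem, rootIdem, mul_smul_comm, smul_mul_assoc, mul_sum, sum_mul]
  simp only [(h.pow_right _).eq]

theorem mem_span_range_rootIdem [NeZero n] {ζ : K} (hζ : IsPrimitiveRoot ζ n)
    (hg : g ^ n = 1) :
    g ∈ Submodule.span K (Set.range fun x : ZMod n => rootIdem n g (ζ ^ x.val)) := by
  have hsum : ∑ x : ZMod n, g * rootIdem n g (ζ ^ x.val) = g := by
    rw [← mul_sum, sum_rootIdem hζ, mul_one]
  have hmem : ∑ x : ZMod n, g * rootIdem n g (ζ ^ x.val)
      ∈ Submodule.span K (Set.range fun x : ZMod n => rootIdem n g (ζ ^ x.val)) := by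
    refine sum_mem fun x _ => ?_
    have hz := hζ.pow_pow_eq_one x.val
    have h := smul_mul_rootIdem hg hz
    rw [smul_mul_assoc, ← eq_inv_smul_iff₀ (IsUnit.of_pow_eq_one hz (NeZero.ne n)).ne_zero] at h
    rw [h]
    exact Submodule.smul_mem _ _ (Submodule.subset_span ⟨x, rfl⟩)
  rwa [hsum] at hmem

theorem rootIdem_mem_adjoin (z : K) : rootIdem n g z ∈ Algebra.adjoin K {g} :=
  Subalgebra.smul_mem _ (sum_mem fun j _ =>
    pow_mem (Subalgebra.smul_mem _ (Algebra.self_mem_adjoin_singleton K g) z) j) _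

end RootIdempotent

section DunklPoly

open Polynomial

variable {K : Type*} [CommRing K] {n : ℕ}

noncomputable def dunklPoly (κ : ZMod n → K) (x : ZMod n) (b : ℕ) : K[X] :=
  ∏ s ∈ range b, (X - C (κ (x - s) + s))

theorem dunklPoly_succ (κ : ZMod n → K) (x : ZMod n) (b : ℕ) :
    dunklPoly κ x (b + 1) = (dunklPoly κ (x - 1) b).comp (X - 1) * (X - C (κ x)) := by
  rw [dunklPoly, prod_range_succ', dunklPoly, Polynomial.prod_comp]
  congr 1
  · refine prod_congr rfl fun s _ => ?_
    rw [sub_comp, X_comp, C_comp, sub_sub, ← C_1, ← C_add]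
    congr 2
    rw [show x - 1 - s = x - (s + 1 : ℕ) by push_cast; ring]
    push_cast
    ring
  · simp

theorem dunklPoly_shift_eq [NeZero n] {κ κ' : ZMod n → K} {p : ℕ} (hp : p < n)
    (h0 : κ' 0 = κ 0) (hlo : ∀ x : ZMod n, 1 ≤ x.val → x.val ≤ p → κ' x = κ x + n)
    (hhi : ∀ x : ZMod n, p < x.val → κ' x = κ x) :
    dunklPoly (fun x : ZMod n => κ (x - p) + p) p n = dunklPoly κ' p n := by
  have hpv : (p : ZMod n).val = p := ZMod.val_cast_of_lt hp
  have key : ∀ x : ZMod n, κ (-x) + p + x.val = κ' (-x) + (x + p).val := by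
    intro x
    rcases eq_or_ne x 0 with rfl | hx
    · simp [hpv, h0]
    have hneg : (-x).val = n - x.val := by rw [ZMod.neg_val, if_neg hx]
    have hx0 : 0 < x.val := (ZMod.val_pos).2 hx
    have hxn := ZMod.val_lt x
    rw [ZMod.val_add, hpv]
    by_cases hlt : x.val + p < n
    · rw [hhi (-x) (by omega), Nat.mod_eq_of_lt hlt]
      push_cast
      ring
    · rw [hlo (-x) (by omega) (by omega), Nat.mod_eq_sub_mod (by omega),
        Nat.mod_eq_of_lt (by omega)]
      push_cast [Nat.cast_sub (by omega : n ≤ x.val + p)]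
      ring
  rw [dunklPoly, dunklPoly, prod_range_eq_prod_zmod_val, prod_range_eq_prod_zmod_val]
  -- the factor at `x` on the left is the factor at `x + p` on the right
  refine Fintype.prod_equiv (Equiv.addRight (p : ZMod n)) _ _ fun x => ?_
  simp only [Equiv.coe_addRight, ZMod.natCast_zmod_val, sub_sub_cancel_left, sub_add_cancel_right,
    key]

end DunklPoly

/-- The relations of `ℂ[∂, y^{±1}] * Γ` used below, with `ε x` the idempotent `e_x` of `ℂΓ`
indexed by `ZMod n` and `yinv = y⁻¹`. -/
structure CyclicWeyl (Q : Type*) [Ring Q] (n : ℕ) [NeZero n] where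
  y : Q
  yinv : Q
  d : Q
  ε : ZMod n → Q
  y_mul_yinv : y * yinv = 1
  yinv_mul_y : yinv * y = 1
  d_mul_y_sub_y_mul_d : d * y - y * d = 1
  ε_mul_self : ∀ x, ε x * ε x = ε x
  ε_mul_ε_of_ne : ∀ x x', x ≠ x' → ε x * ε x' = 0
  sum_ε : ∑ x, ε x = 1
  y_mul_ε : ∀ x, y * ε x = ε (x + 1) * y
  ε_mul_d : ∀ x, ε x * d = d * ε (x + 1)

namespace CyclicWeyl

section Ring

variable {Q : Type*} [Ring Q] {n : ℕ} [NeZero n] (W : CyclicWeyl Q n)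

theorem ε_mul_ε (x x' : ZMod n) : W.ε x * W.ε x' = if x = x' then W.ε x else 0 := by
  split_ifs with h
  · rw [h, W.ε_mul_self]
  · exact W.ε_mul_ε_of_ne x x' h

theorem commute_ε (x x' : ZMod n) : Commute (W.ε x) (W.ε x') := by
  by_cases h : x = x'
  · rw [h]
  · exact (W.ε_mul_ε_of_ne x x' h).trans (W.ε_mul_ε_of_ne x' x (Ne.symm h)).symm

theorem yinv_mul_ε (x : ZMod n) : W.yinv * W.ε x = W.ε (x - 1) * W.yinv := by
  calc W.yinv * W.ε x = W.yinv * (W.ε (x - 1 + 1) * W.y) * W.yinv := by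
        rw [sub_add_cancel, mul_assoc, mul_assoc, W.y_mul_yinv, mul_one]
    _ = W.ε (x - 1) * W.yinv := by
        rw [← W.y_mul_ε, ← mul_assoc, W.yinv_mul_y, one_mul]

theorem ε_mul_yinv (x : ZMod n) : W.ε x * W.yinv = W.yinv * W.ε (x + 1) := by
  rw [W.yinv_mul_ε, add_sub_cancel_right]

theorem d_mul_ε (x : ZMod n) : W.d * W.ε x = W.ε (x - 1) * W.d := by
  rw [W.ε_mul_d, sub_add_cancel]

theorem y_pow_mul_ε (a : ℕ) (x : ZMod n) : W.y ^ a * W.ε x = W.ε (x + a) * W.y ^ a := by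
  simpa using pow_mul_eq_of_forall_mul_eq W.y_mul_ε a x

def yUnit : Qˣ := ⟨W.y, W.yinv, W.y_mul_yinv, W.yinv_mul_y⟩

theorem y_pow_mul_yinv_pow (a : ℕ) : W.y ^ a * W.yinv ^ a = 1 := by
  have := (W.yUnit ^ a).mul_inv
  rwa [Units.val_pow_eq_pow_val, ← inv_pow, Units.val_pow_eq_pow_val] at this

theorem yinv_pow_mul_y_pow (a : ℕ) : W.yinv ^ a * W.y ^ a = 1 := by
  have := (W.yUnit ^ a).inv_mul
  rwa [Units.val_pow_eq_pow_val, ← inv_pow, Units.val_pow_eq_pow_val] at this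

theorem y_mul_d : W.y * W.d = W.d * W.y - 1 := by
  rw [← W.d_mul_y_sub_y_mul_d, sub_sub_cancel]

theorem y_mul_d_mul_yinv : W.y * W.d * W.yinv = W.d - W.yinv := by
  rw [W.y_mul_d, sub_mul, mul_assoc, W.y_mul_yinv, mul_one, one_mul]

end Ring

section Dunkl

open Polynomial

variable {K Q : Type*} [CommRing K] [Ring Q] [Algebra K Q] {n : ℕ} [NeZero n]
  (W : CyclicWeyl Q n)

variable (K) in
noncomputable def conj (a : ℕ) : Q ≃ₐ[K] Q :=
  MulSemiringAction.toAlgEquiv K Q (ConjAct.toConjAct (W.yUnit ^ a))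

theorem conj_apply (a : ℕ) (z : Q) : W.conj K a z = W.y ^ a * z * W.yinv ^ a := by
  simp [conj, ConjAct.units_smul_def, yUnit]

theorem conj_succ (a : ℕ) (z : Q) : W.conj K (a + 1) z = W.y * W.conj K a z * W.yinv := by
  rw [conj_apply, conj_apply, pow_succ', pow_succ]
  simp only [mul_assoc]

theorem conj_y (a : ℕ) : W.conj K a W.y = W.y := by
  rw [conj_apply, ← pow_succ, pow_succ', mul_assoc, W.y_pow_mul_yinv_pow, mul_one]

theorem conj_ε (a : ℕ) (x : ZMod n) : W.conj K a (W.ε x) = W.ε (x + a) := by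
  rw [conj_apply, W.y_pow_mul_ε, mul_assoc, W.y_pow_mul_yinv_pow, mul_one]

/-- `θ = y∂`; the factors `∂ - c y⁻¹` of powers of Dunkl operators are `y⁻¹ (θ - c)`. -/
def euler : Q := W.y * W.d

theorem sub_smul_yinv_eq (c : K) : W.d - c • W.yinv = W.yinv * aeval W.euler (X - C c) := by
  rw [map_sub, aeval_X, aeval_C, mul_sub, euler, ← mul_assoc, W.yinv_mul_y, one_mul,
    ← Algebra.commutes, Algebra.smul_def]

theorem sub_smul_yinv_mul_ε (c : K) (x : ZMod n) :
    (W.d - c • W.yinv) * W.ε x = W.ε (x - 1) * (W.d - c • W.yinv) := by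
  rw [sub_mul, mul_sub, smul_mul_assoc, mul_smul_comm, W.d_mul_ε, W.yinv_mul_ε]

theorem aeval_euler_mul_yinv (f : K[X]) :
    aeval W.euler f * W.yinv = W.yinv * aeval W.euler (f.comp (X - 1)) := by
  have hθ : W.conj K 1 W.euler = W.euler - 1 := by
    rw [conj_apply, pow_one, pow_one, euler, mul_assoc W.y (W.y * W.d), W.y_mul_d_mul_yinv,
      mul_sub, W.y_mul_yinv]
  calc aeval W.euler f * W.yinv = W.yinv * W.conj K 1 (aeval W.euler f) := by
        rw [conj_apply, pow_one, pow_one, ← mul_assoc, ← mul_assoc, W.yinv_mul_y, one_mul]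
    _ = W.yinv * aeval W.euler (f.comp (X - 1)) := by
        rw [← Polynomial.aeval_algHom_apply, hθ, aeval_comp]
        simp

/-- The paper's `d_k`, with `k` read on `ZMod n`. -/
def dunkl (κ : ZMod n → K) : Q := W.d - W.yinv * ∑ x, κ x • W.ε x

variable (κ : ZMod n → K)

theorem commute_sum_smul_ε (x : ZMod n) : Commute (∑ x', κ x' • W.ε x') (W.ε x) :=
  Commute.sum_left _ _ _ fun x' _ => (W.commute_ε x' x).smul_left _

theorem sum_smul_ε_mul_ε (x : ZMod n) :
    (∑ x', κ x' • W.ε x') * W.ε x = κ x • W.ε x := by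
  rw [sum_mul, sum_eq_single x (fun x' _ hx' => by rw [smul_mul_assoc, W.ε_mul_ε_of_ne x' x hx',
    smul_zero]) (by simp), smul_mul_assoc, W.ε_mul_self]

theorem dunkl_mul_ε_eq_sub (x : ZMod n) :
    W.dunkl κ * W.ε x = (W.d - κ x • W.yinv) * W.ε x := by
  rw [dunkl, sub_mul, mul_assoc, sum_smul_ε_mul_ε, mul_smul_comm, sub_mul, smul_mul_assoc]

theorem dunkl_mul_ε (x : ZMod n) : W.dunkl κ * W.ε x = W.ε (x - 1) * W.dunkl κ := by
  rw [dunkl, sub_mul, mul_sub, W.d_mul_ε, mul_assoc, (W.commute_sum_smul_ε κ x).eq,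
    ← mul_assoc, W.yinv_mul_ε, mul_assoc]

theorem dunkl_pow_mul_ε (b : ℕ) (x : ZMod n) :
    W.dunkl κ ^ b * W.ε x = W.ε (x - b) * W.dunkl κ ^ b := by
  have h (x : ZMod n) : W.dunkl κ * W.ε x = W.ε (x + -1) * W.dunkl κ := by
    rw [← sub_eq_add_neg, W.dunkl_mul_ε]
  simpa [← sub_eq_add_neg] using pow_mul_eq_of_forall_mul_eq h b x

theorem y_mul_dunkl : W.y * W.dunkl κ = W.euler - ∑ x, κ x • W.ε x := by
  rw [dunkl, mul_sub, ← mul_assoc, W.y_mul_yinv, one_mul, euler]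

theorem dunkl_mul_y_mul_ε (x : ZMod n) :
    W.dunkl κ * W.y * W.ε x = W.y * W.dunkl κ * W.ε x + (1 + κ x - κ (x + 1)) • W.ε x := by
  rw [mul_assoc, W.y_mul_ε, ← mul_assoc, W.dunkl_mul_ε_eq_sub, mul_assoc, ← W.y_mul_ε,
    mul_assoc W.y, W.dunkl_mul_ε_eq_sub, ← mul_assoc, ← mul_assoc]
  simp only [sub_mul, mul_sub, smul_mul_assoc, mul_smul_comm, W.yinv_mul_y, W.y_mul_yinv,
    W.y_mul_d, one_mul]
  module

theorem conj_one_dunkl : W.y * W.dunkl κ * W.yinv = W.dunkl (fun x => κ (x - 1) + 1) := by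
  have hsum : (∑ x, κ x • W.ε x) * W.yinv = W.yinv * ∑ x, κ (x - 1) • W.ε x := by
    rw [sum_mul, mul_sum]
    exact Fintype.sum_equiv (Equiv.addRight 1) _ _ fun x => by
      rw [Equiv.coe_addRight, add_sub_cancel_right, smul_mul_assoc, W.ε_mul_yinv, mul_smul_comm]
  rw [y_mul_dunkl, sub_mul, euler, W.y_mul_d_mul_yinv, hsum]
  unfold dunkl
  simp only [add_smul, one_smul, sum_add_distrib, W.sum_ε, mul_add, mul_one]
  abel

theorem conj_dunkl (a : ℕ) : W.conj K a (W.dunkl κ) = W.dunkl (fun x => κ (x - a) + a) := by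
  induction a with
  | zero => simp [conj_apply]
  | succ a ih =>
    rw [conj_succ, ih, conj_one_dunkl]
    congr 1
    funext x
    push_cast
    ring_nf

theorem dunkl_mul_y_pow_mul_ε (a : ℕ) (x : ZMod n) :
    W.dunkl κ * W.y ^ (a + 1) * W.ε x = W.y ^ (a + 1) * W.dunkl κ * W.ε x
      + ((a + 1 : K) + κ x - κ (x + a + 1)) • (W.y ^ a * W.ε x) := by
  induction a with
  | zero => simpa using W.dunkl_mul_y_mul_ε κ x
  | succ a ih =>
    calc W.dunkl κ * W.y ^ (a + 1 + 1) * W.ε x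
        = (W.dunkl κ * W.y * W.ε (x + (a + 1 : ℕ))) * W.y ^ (a + 1) := by
          rw [pow_succ', ← mul_assoc, mul_assoc _ (W.y ^ (a + 1)), W.y_pow_mul_ε, ← mul_assoc]
      _ = W.y * (W.dunkl κ * W.y ^ (a + 1) * W.ε x)
          + (1 + κ (x + (a + 1 : ℕ)) - κ (x + (a + 1 : ℕ) + 1))
            • (W.y ^ (a + 1) * W.ε x) := by
          rw [W.dunkl_mul_y_mul_ε, add_mul, smul_mul_assoc]
          simp only [mul_assoc]
          rw [← W.y_pow_mul_ε]
      _ = _ := by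
          rw [ih, mul_add, mul_smul_comm, ← mul_assoc, ← mul_assoc, ← pow_succ',
            ← mul_assoc, ← pow_succ', add_assoc, ← add_smul]
          congr 1
          push_cast
          ring_nf

theorem dunkl_pow_mul_ε_eq_aeval (b : ℕ) (x : ZMod n) :
    W.dunkl κ ^ b * W.ε x = W.yinv ^ b * aeval W.euler (dunklPoly κ x b) * W.ε x := by
  induction b generalizing x with
  | zero => simp [dunklPoly]
  | succ b ih =>
    calc W.dunkl κ ^ (b + 1) * W.ε x
        = W.dunkl κ ^ b * W.ε (x - 1) * (W.d - κ x • W.yinv) := by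
          rw [pow_succ, mul_assoc, W.dunkl_mul_ε_eq_sub, W.sub_smul_yinv_mul_ε, mul_assoc]
      _ = W.yinv ^ b * (aeval W.euler (dunklPoly κ (x - 1) b) * W.yinv)
            * aeval W.euler (X - C (κ x)) * W.ε x := by
          rw [ih, mul_assoc _ (W.ε _), ← W.sub_smul_yinv_mul_ε, W.sub_smul_yinv_eq]
          simp only [mul_assoc]
      _ = _ := by
          rw [aeval_euler_mul_yinv, dunklPoly_succ, map_mul, pow_succ]
          simp only [mul_assoc]

theorem monomial_eq_ε_mul (a b : ℕ) (x : ZMod n) :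
    W.y ^ a * W.dunkl κ ^ b * W.ε x = W.ε (x - b + a) * (W.y ^ a * W.dunkl κ ^ b) := by
  rw [mul_assoc, W.dunkl_pow_mul_ε, ← mul_assoc, W.y_pow_mul_ε, mul_assoc]

theorem commute_monomial {a b : ℕ} (hab : (a : ZMod n) = b) (x : ZMod n) :
    Commute (W.y ^ a * W.dunkl κ ^ b) (W.ε x) := by
  have h := W.monomial_eq_ε_mul κ a b x
  rwa [hab, sub_add_cancel] at h

theorem commute_dunkl_pow {b : ℕ} (hb : (b : ZMod n) = 0) (x : ZMod n) :
    Commute (W.dunkl κ ^ b) (W.ε x) := by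
  simpa using W.commute_monomial κ (a := 0) (by rw [hb, Nat.cast_zero]) x

theorem dunkl_mul_monomial (a b : ℕ) (x : ZMod n) :
    W.dunkl κ * (W.y ^ (a + 1) * W.dunkl κ ^ b * W.ε x)
      = W.y ^ (a + 1) * W.dunkl κ ^ (b + 1) * W.ε x
        + ((a + 1 : K) + κ (x - b) - κ (x - b + a + 1))
          • (W.y ^ a * W.dunkl κ ^ b * W.ε x) := by
  rw [mul_assoc _ _ (W.ε x), W.dunkl_pow_mul_ε, ← mul_assoc, ← mul_assoc,
    W.dunkl_mul_y_pow_mul_ε, add_mul, smul_mul_assoc]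
  simp only [mul_assoc, ← W.dunkl_pow_mul_ε]
  rw [← mul_assoc (W.dunkl κ), ← pow_succ']

variable (K) in
/-- The paper's `H_κ`, with `Γ` replaced by the idempotents `ε x`, which span `ℂΓ`
(see `adjoin_eq_H`). -/
def H : Subalgebra K Q := Algebra.adjoin K (insert (W.dunkl κ) (insert W.y (Set.range W.ε)))

theorem dunkl_mem_H : W.dunkl κ ∈ W.H K κ := Algebra.subset_adjoin (by simp)

theorem y_mem_H : W.y ∈ W.H K κ := Algebra.subset_adjoin (by simp)

theorem ε_mem_H (x : ZMod n) : W.ε x ∈ W.H K κ := Algebra.subset_adjoin (by simp)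

theorem H_le_span : Subalgebra.toSubmodule (W.H K κ) ≤
    Submodule.span K {z | ∃ (a b : ℕ) (x : ZMod n), z = W.y ^ a * W.dunkl κ ^ b * W.ε x} := by
  refine Algebra.adjoin_le_span_of_mul_mem ?_ ?_
  · rw [← W.sum_ε]
    exact sum_mem fun x _ => Submodule.subset_span ⟨0, 0, x, by simp⟩
  · rintro g hg _ ⟨a, b, x, rfl⟩
    rcases hg with rfl | rfl | ⟨x', rfl⟩
    · cases a with
      | zero => exact Submodule.subset_span ⟨0, b + 1, x, by simp [pow_succ', mul_assoc]⟩
      | succ a =>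
        rw [W.dunkl_mul_monomial]
        exact add_mem (Submodule.subset_span ⟨_, _, _, rfl⟩)
          (Submodule.smul_mem _ _ (Submodule.subset_span ⟨_, _, _, rfl⟩))
    · exact Submodule.subset_span ⟨a + 1, b, x, by simp [pow_succ', mul_assoc]⟩
    · rw [W.monomial_eq_ε_mul, ← mul_assoc, W.ε_mul_ε]
      split_ifs with h
      · rw [h, ← W.monomial_eq_ε_mul]
        exact Submodule.subset_span ⟨_, _, _, rfl⟩
      · rw [zero_mul]
        exact zero_mem _

theorem y_mul_dunkl_mem_H (κ' : ZMod n → K) : W.y * W.dunkl κ ∈ W.H K κ' := by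
  have h : W.y * W.dunkl κ = W.y * W.dunkl κ' + ∑ x, (κ' x - κ x) • W.ε x := by
    rw [y_mul_dunkl, y_mul_dunkl]
    simp only [sub_smul, sum_sub_distrib]
    abel
  rw [h]
  exact add_mem (mul_mem (W.y_mem_H κ') (W.dunkl_mem_H κ'))
    (sum_mem fun x _ => Subalgebra.smul_mem _ (W.ε_mem_H κ' x) _)

theorem y_pow_mul_dunkl_pow_mem_H (κ' : ZMod n → K) (b : ℕ) :
    W.y ^ b * W.dunkl κ ^ b ∈ W.H K κ' := by
  induction b with
  | zero => simp [one_mem]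
  | succ b ih =>
    have h : W.y ^ (b + 1) * W.dunkl κ ^ (b + 1)
        = W.y * W.conj K b (W.dunkl κ) * (W.y ^ b * W.dunkl κ ^ b) := by
      rw [conj_apply, pow_succ', pow_succ']
      simp only [mul_assoc]
      rw [← mul_assoc (W.yinv ^ b), W.yinv_pow_mul_y_pow, one_mul]
    rw [h, conj_dunkl]
    exact mul_mem (W.y_mul_dunkl_mem_H _ κ') ih

variable {κ} {κ' : ZMod n → K} {p : ZMod n}

theorem dunkl_pow_mul_mul_ε_eq (hpow : W.dunkl κ ^ n * W.ε p = W.dunkl κ' ^ n * W.ε p)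
    (q : ℕ) : W.dunkl κ ^ (n * q) * W.ε p = W.dunkl κ' ^ (n * q) * W.ε p := by
  have hn : ((n : ℕ) : ZMod n) = 0 := ZMod.natCast_self n
  induction q with
  | zero => simp
  | succ q ih =>
    have hc := (W.commute_dunkl_pow κ' hn p).eq
    rw [mul_add_one, pow_add, pow_add, mul_assoc, hpow, hc, ← mul_assoc, ih, mul_assoc, ← hc,
      mul_assoc]

theorem monomial_mem_corner (hpow : W.dunkl κ ^ n * W.ε p = W.dunkl κ' ^ n * W.ε p) {a b : ℕ}
    (hab : (a : ZMod n) = b) :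
    W.y ^ a * W.dunkl κ ^ b * W.ε p ∈ corner (W.ε p) (W.H K κ') := by
  rcases le_total b a with hba | hab'
  · obtain ⟨c, rfl⟩ := Nat.exists_eq_add_of_le hba
    refine mul_mem_corner_of_commute (W.ε_mul_self p) ?_ (W.commute_monomial κ hab p)
    rw [add_comm, pow_add, mul_assoc]
    exact mul_mem (pow_mem (W.y_mem_H κ') c) (W.y_pow_mul_dunkl_pow_mem_H κ κ' b)
  · obtain ⟨c, rfl⟩ := Nat.exists_eq_add_of_le hab'
    have hc : (c : ZMod n) = 0 := by simpa using hab
    obtain ⟨q, rfl⟩ := (ZMod.natCast_eq_zero_iff c n).1 hc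
    rw [pow_add, ← mul_assoc, mul_assoc, W.dunkl_pow_mul_mul_ε_eq hpow, ← mul_assoc]
    exact mul_mem_corner_of_commute (W.ε_mul_self p)
      (mul_mem (W.y_pow_mul_dunkl_pow_mem_H κ κ' a) (pow_mem (W.dunkl_mem_H κ') _))
      ((W.commute_monomial κ rfl p).mul_left (W.commute_dunkl_pow κ' hc p))

theorem corner_H_subset (hpow : W.dunkl κ ^ n * W.ε p = W.dunkl κ' ^ n * W.ε p) :
    corner (W.ε p) (W.H K κ) ⊆ corner (W.ε p) (W.H K κ') := by
  let f : Q →ₗ[K] Q := LinearMap.mulRight K (W.ε p) ∘ₗ LinearMap.mulLeft K (W.ε p)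
  let T : Submodule K Q := (Subalgebra.toSubmodule (W.H K κ')).map f
  have hT : (T : Set Q) = corner (W.ε p) (W.H K κ') := Submodule.map_coe _ _
  have hspan : Submodule.span K {z | ∃ (a b : ℕ) (x : ZMod n),
      z = W.y ^ a * W.dunkl κ ^ b * W.ε x} ≤ T.comap f := by
    rw [Submodule.span_le]
    rintro _ ⟨a, b, x, rfl⟩
    change W.ε p * (W.y ^ a * W.dunkl κ ^ b * W.ε x) * W.ε p ∈ T
    by_cases hx : x = p
    · subst hx
      rw [mul_assoc _ _ (W.ε x), mul_assoc (W.y ^ a * W.dunkl κ ^ b), W.ε_mul_self,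
        W.monomial_eq_ε_mul, ← mul_assoc, W.ε_mul_ε]
      split_ifs with hab
      · have hab : (a : ZMod n) = b := by linear_combination -hab
        rw [← (W.commute_monomial κ hab x).eq, ← SetLike.mem_coe, hT]
        exact W.monomial_mem_corner hpow hab
      · rw [zero_mul]
        exact zero_mem T
    · rw [mul_assoc _ _ (W.ε p), mul_assoc (W.y ^ a * W.dunkl κ ^ b), W.ε_mul_ε_of_ne x p hx,
        mul_zero, mul_zero]
      exact zero_mem T
  rintro _ ⟨h, hh, rfl⟩
  rw [← hT]
  exact hspan (W.H_le_span κ hh)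

theorem corner_H_eq (hpow : W.dunkl κ ^ n * W.ε p = W.dunkl κ' ^ n * W.ε p) :
    corner (W.ε p) (W.H K κ) = corner (W.ε p) (W.H K κ') :=
  (W.corner_H_subset hpow).antisymm (W.corner_H_subset hpow.symm)

theorem y_pow_mul_corner_eq (p : ℕ) (h : Q) :
    W.y ^ p * (W.ε 0 * h * W.ε 0) = W.ε p * W.conj K p h * W.ε p * W.y ^ p := by
  have hp : W.ε p * W.y ^ p = W.y ^ p * W.ε 0 := by rw [W.y_pow_mul_ε, zero_add]
  calc W.y ^ p * (W.ε 0 * h * W.ε 0)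
      = W.ε p * W.y ^ p * h * (W.yinv ^ p * (W.ε p * W.y ^ p)) := by
        rw [hp, ← mul_assoc (W.yinv ^ p), W.yinv_pow_mul_y_pow, one_mul]
        simp only [mul_assoc]
    _ = _ := by
        rw [conj_apply]
        simp only [mul_assoc]

theorem map_conj_H (p : ℕ) :
    (W.H K κ).map (W.conj K p : Q →ₐ[K] Q) = W.H K (fun x => κ (x - p) + p) := by
  rw [H, AlgHom.map_adjoin, H]
  congr 1
  simp only [Set.image_insert_eq, AlgEquiv.coe_toAlgHom, conj_dunkl, conj_y, ← Set.range_comp]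
  congr 2
  exact ((congrArg Set.range (funext fun x => W.conj_ε (K := K) p x)).trans
    ((Equiv.addRight (p : ZMod n)).surjective.range_comp W.ε))

theorem image_y_pow_mul_corner (p : ℕ)
    (hpoly : dunklPoly (fun x : ZMod n => κ (x - p) + p) p n = dunklPoly κ' p n) :
    (fun h => W.y ^ p * (W.ε 0 * h * W.ε 0)) '' (W.H K κ : Set Q)
      = (fun h => W.ε p * h * (W.ε p * W.y ^ p)) '' (W.H K κ' : Set Q) := by
  have hpow : W.dunkl (fun x => κ (x - p) + p) ^ n * W.ε p = W.dunkl κ' ^ n * W.ε p := by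
    rw [dunkl_pow_mul_ε_eq_aeval, dunkl_pow_mul_ε_eq_aeval, hpoly]
  calc (fun h => W.y ^ p * (W.ε 0 * h * W.ε 0)) '' (W.H K κ : Set Q)
      = (· * W.y ^ p) '' corner (W.ε p) (W.H K (fun x => κ (x - p) + p)) := by
        rw [← map_conj_H, corner, Subalgebra.coe_map, Set.image_image, Set.image_image]
        exact Set.image_congr fun h _ => W.y_pow_mul_corner_eq p h
    _ = (· * W.y ^ p) '' corner (W.ε p) (W.H K κ') := by rw [W.corner_H_eq hpow]
    _ = _ := by
        rw [corner, Set.image_image]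
        simp only [mul_assoc]

theorem adjoin_eq_H {g : Q} (hg : g ∈ Submodule.span K (Set.range W.ε))
    (hε : ∀ x, W.ε x ∈ Algebra.adjoin K {g}) :
    Algebra.adjoin K {W.dunkl κ, W.y, g} = W.H K κ := by
  apply le_antisymm
  · rw [Algebra.adjoin_le_iff]
    rintro _ (rfl | rfl | rfl)
    · exact W.dunkl_mem_H κ
    · exact W.y_mem_H κ
    · refine (Submodule.span_le.2 ?_ : _ ≤ Subalgebra.toSubmodule (W.H K κ)) hg
      rintro _ ⟨x, rfl⟩
      exact W.ε_mem_H κ x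
  · rw [H, Algebra.adjoin_le_iff]
    rintro _ (rfl | rfl | ⟨x, rfl⟩)
    · exact Algebra.subset_adjoin (by simp)
    · exact Algebra.subset_adjoin (by simp)
    · exact Algebra.adjoin_mono (by simp) (hε x)

end Dunkl

section PrimitiveRoot

variable {K Q : Type*} [Field K] [Ring Q] [Algebra K Q] {n : ℕ} [NeZero n] {ζ : K}

noncomputable def ofPrimitiveRoot (hζ : IsPrimitiveRoot ζ n) {g : Q} (hg : g ^ n = 1)
    (y yinv d : Q) (hy : y * yinv = 1) (hy' : yinv * y = 1) (hWeyl : d * y - y * d = 1)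
    (hyg : y * g = ζ • (g * y)) (hgd : g * d = ζ • (d * g)) : CyclicWeyl Q n where
  y := y
  yinv := yinv
  d := d
  ε x := rootIdem n g (ζ ^ x.val)
  y_mul_yinv := hy
  yinv_mul_y := hy'
  d_mul_y_sub_y_mul_d := hWeyl
  ε_mul_self x := rootIdem_mul_self hζ.neZero'.out hg (hζ.pow_pow_eq_one x.val)
  ε_mul_ε_of_ne x x' hx := rootIdem_mul_rootIdem_of_ne hg (hζ.pow_pow_eq_one x.val)
    (hζ.pow_pow_eq_one x'.val)
    fun h => hx (ZMod.val_injective n (hζ.pow_inj (ZMod.val_lt x) (ZMod.val_lt x') h))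
  sum_ε := sum_rootIdem hζ
  y_mul_ε x := by rw [y_mul_rootIdem hyg, hζ.mul_pow_val]
  ε_mul_d x := by rw [rootIdem_mul hgd, hζ.mul_pow_val]

end PrimitiveRoot

end CyclicWeyl

theorem statement4_general {Q : Type*} [Ring Q] [Algebra ℂ Q] (n : ℕ) (hn : 0 < n)
    (y yinv d γ : Q)
    (hy : y * yinv = 1) (hy' : yinv * y = 1)
    (hWeyl : d * y - y * d = 1)
    (hγ : γ ^ n = 1)
    (hyγ : y * γ = omegaRoot n • (γ * y))
    (hγd : γ * d = omegaRoot n • (d * γ))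
    (e : ℕ → Q)
    (he : ∀ i, e i = (n : ℂ)⁻¹ • ∑ j ∈ range n, ((omegaRoot n) ^ i • γ) ^ j)
    (k k' : ℤ → ℂ) (hk0 : k 0 = 0)
    (p : ℕ) (hpn : p ≤ n - 1)
    (hk'0 : k' 0 = 0)
    (hk'lo : ∀ i : ℕ, 1 ≤ i → i ≤ p → k' i = k i + n)
    (hk'hi : ∀ i : ℕ, p < i → i ≤ n - 1 → k' i = k i)
    (dk dk' : Q)
    (hdk : dk = d - yinv * ∑ i ∈ Icc 1 (n - 1), k i • e i)
    (hdk' : dk' = d - yinv * ∑ i ∈ Icc 1 (n - 1), k' i • e i) :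
    (fun h => y ^ p * (e 0 * h * e 0)) '' (Algebra.adjoin ℂ {dk, y, γ} : Set Q)
      = (fun h => e p * h * (e p * y ^ p)) ''
          (Algebra.adjoin ℂ {dk', y, γ} : Set Q) := by
  have : NeZero n := ⟨hn.ne'⟩
  have hζ : IsPrimitiveRoot (omegaRoot n) n := Complex.isPrimitiveRoot_exp n hn.ne'
  let W := CyclicWeyl.ofPrimitiveRoot hζ hγ y yinv d hy hy' hWeyl hyγ hγd
  have he' : ∀ i : ℕ, e i = W.ε i := fun i => by
    rw [he]
    exact congrArg (rootIdem n γ) (hζ.pow_val_natCast i).symm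
  have hdunkl : ∀ κ : ℤ → ℂ, κ 0 = 0 →
      d - yinv * ∑ i ∈ Icc 1 (n - 1), κ i • e i = W.dunkl (fun x => κ x.val) := by
    intro κ hκ
    rw [sum_Icc_eq_sum_zmod_val _ (by rw [Nat.cast_zero, hκ, zero_smul])]
    simp only [he', ZMod.natCast_zmod_val]
    rfl
  have hH : ∀ κ, Algebra.adjoin ℂ {W.dunkl κ, y, γ} = W.H ℂ κ := fun κ =>
    W.adjoin_eq_H (κ := κ) (mem_span_range_rootIdem hζ hγ) fun x => rootIdem_mem_adjoin _
  rw [hdk, hdk', hdunkl k hk0, hdunkl k' hk'0, hH, hH, he' 0, he' p, Nat.cast_zero]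
  have hpoly := dunklPoly_shift_eq (κ := fun x : ZMod n => k x.val)
    (κ' := fun x : ZMod n => k' x.val) (by omega : p < n) (by simp [hk0, hk'0])
    (fun x h1 h2 => hk'lo x.val h1 h2) (fun x h => hk'hi x.val h (by have := ZMod.val_lt x; omega))
  exact W.image_y_pow_mul_corner (κ := fun x => k x.val) (κ' := fun x => k' x.val) p hpoly

/-- Fix `1 ≤ p ≤ n−1` and set `k' = k + w_p` (so `k'_i = k_i + n` for `1 ≤ i ≤ p` and
`k'_i = k_i` for `p < i ≤ n−1`, extended periodically).  Then
`y^p e H_k e = e_p H_{k'} e_p y^p` inside `Q = ℂ[∂, y^{±1}] * Γ`, where `e = e_0`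
and `H_k` is the subalgebra of `Q` generated by `d_k`, `y`, `γ`. -/
theorem statement4 {Q : Type*} [Ring Q] [Algebra ℂ Q] (n : ℕ) (hn : 0 < n)
    (y yinv d γ : Q)
    (hy : y * yinv = 1) (hy' : yinv * y = 1)
    (hWeyl : d * y - y * d = 1)
    (hγ : γ ^ n = 1)
    (hyγ : y * γ = omegaRoot n • (γ * y))
    (hγd : γ * d = omegaRoot n • (d * γ))
    (e : ℕ → Q)
    (he : ∀ i, e i = (n : ℂ)⁻¹ • ∑ j ∈ range n, ((omegaRoot n) ^ i • γ) ^ j)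
    (k k' : ℤ → ℂ) (hk0 : k 0 = 0) (hkper : ∀ j : ℤ, k (j + n) = k j)
    (p : ℕ) (hp1 : 1 ≤ p) (hpn : p ≤ n - 1)
    (hk'0 : k' 0 = 0) (hk'per : ∀ j : ℤ, k' (j + n) = k' j)
    (hk'lo : ∀ i : ℕ, 1 ≤ i → i ≤ p → k' i = k i + n)
    (hk'hi : ∀ i : ℕ, p < i → i ≤ n - 1 → k' i = k i)
    (dk dk' : Q)
    (hdk : dk = d - yinv * ∑ i ∈ Icc 1 (n - 1), k i • e i)
    (hdk' : dk' = d - yinv * ∑ i ∈ Icc 1 (n - 1), k' i • e i) :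
    (fun h => y ^ p * (e 0 * h * e 0)) '' (Algebra.adjoin ℂ {dk, y, γ} : Set Q)
      = (fun h => e p * h * (e p * y ^ p)) ''
          (Algebra.adjoin ℂ {dk', y, γ} : Set Q) :=
  statement4_general n hn y yinv d γ hy hy' hWeyl hγ hyγ hγd e he k k' hk0 p hpn hk'0 hk'lo hk'hi dk
    dk' hdk hdk'
end

section
/- Define the dot action of S_{n-1} on C^{n-1} by s·x = s(x+ρ) − ρ where ρ = (n−1, n−2, …, 1) and s permutes coordinates. Say k ∈ C^{n-1} is dominant if (k+ρ, α) > 0 for all α ∈ Φ_a ∩ Φ^+, where a = (k+ρ)/n extended by a_n = 0, Φ is the type A_{n-1} root system in C^n with v_i − v_j, and Φ_a = {α ∈ Φ : (a, α) ∈ Z}. Then: if k is dominant and k' = k + w_p (w_p = n∑_{i=1}^p v_i), then k' is also dominant. -/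
/-- `ρ = (n−1, n−2, …, 1, 0)` as a vector in `ℂ^n` (0-indexed: `ρ i = n − 1 − i`). -/
def rhoVec (n : ℕ) : Fin n → ℂ := fun i => ((n - 1 - (i : ℕ) : ℕ) : ℂ)

/-- `k ∈ ℂ^{n-1} ⊆ ℂ^n` is dominant if `(k+ρ, α) > 0` for every positive root
`α = v_i − v_j` (`i < j`) lying in `Φ_a = {α : (a, α) ∈ ℤ}`, where `a = (k+ρ)/n`.
Since `(k+ρ, α) = n (a, α)` is then an integer, positivity is expressed as being a
positive integer. -/
def IsDominant (n : ℕ) (k : Fin n → ℂ) : Prop :=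
  ∀ i j : Fin n, i < j →
    (∃ m : ℤ, (k i + rhoVec n i) / n - (k j + rhoVec n j) / n = (m : ℂ)) →
    ∃ m : ℤ, 0 < m ∧ (k i + rhoVec n i) - (k j + rhoVec n j) = (m : ℂ)

/-- If `k` is dominant and `k' = k + w_p` (where `w_p = n ∑_{i=1}^{p} v_i`), then `k'`
is also dominant.  Here `ℂ^{n-1}` is embedded in `ℂ^n` as `ℂ^{n-1} × {0}`. -/
theorem statement8 (n : ℕ) (hn : 1 ≤ n) (p : ℕ) (hp1 : 1 ≤ p) (hpn : p ≤ n - 1)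
    (k k' : Fin n → ℂ)
    (hklast : ∀ i : Fin n, (i : ℕ) = n - 1 → k i = 0)
    (hk' : ∀ i : Fin n, k' i = k i + (if (i : ℕ) < p then (n : ℂ) else 0))
    (hdom : IsDominant n k) :
    IsDominant n k' := by
  have hn0 : (n : ℂ) ≠ 0 := Nat.cast_ne_zero.mpr (by omega)
  intro i j hij hint
  rw [hk' i, hk' j] at hint ⊢
  have hij' : (i : ℕ) < (j : ℕ) := hij
  by_cases hj : (j : ℕ) < p
  · have hi : (i : ℕ) < p := lt_trans hij' hj
    simp only [if_pos hi, if_pos hj] at hint ⊢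
    obtain ⟨m, hm⟩ := hint
    obtain ⟨m0, hm0, hm0eq⟩ := hdom i j hij ⟨m, by
      field_simp at hm ⊢; linear_combination hm⟩
    exact ⟨m0, hm0, by linear_combination hm0eq⟩
  · by_cases hi : (i : ℕ) < p
    · simp only [if_pos hi, if_neg hj] at hint ⊢
      obtain ⟨m, hm⟩ := hint
      obtain ⟨m0, hm0, hm0eq⟩ := hdom i j hij ⟨m - 1, by
        push_cast
        field_simp at hm ⊢
        linear_combination hm⟩
      exact ⟨m0 + n, by omega, by push_cast; linear_combination hm0eq⟩
    · simp only [if_neg hi, if_neg hj, add_zero] at hint ⊢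
      exact hdom i j hij hint
end

section
/- For b ∈ N^{n-1} the divisor D(b) = ∑_{i=1}^{n-1} b_i D(i) on the toric resolution X has a convex support function ψ_{D(b)}; consequently O(D(b)) is generated by its global sections and H^i(X, O(D(b))) = 0 for all i > 0. -/
/-!
The coefficients `a_k` of `D(b)` form a convex sequence: `a_{k+1} - a_k = ∑_{j ≥ n-k} b_j` is
nondecreasing in `k`. So the character `m_i` interpolating `-a` at `v_i, v_{i+1}` satisfies
`⟨m_i, v_j⟩ ≥ -a_j` for every `j` (a convex sequence lies above its chords' extensions): then
`ψ = min_i ⟨m_i, ·⟩` is concave and equals `⟨m_i, ·⟩` on the cone of `v_i, v_{i+1}`, and each `m_i`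
is a global section generating `O(D(b))` on the corresponding chart.

For `H¹`, fix a character `u`. As `j ↦ ⟨u, v_j⟩ + a_j` is convex, `χ^u` is not regular along any ray
lying between two charts on which it is not regular, so the cocycle carries the coefficient of
`χ^u` unchanged from one such chart to the other, and these coefficients glue to a `0`-cochain.
For `H²`, the nerve of the cover is a path and only adjacent pairs restrict sections, so the
primitive `h 1` of a `2`-cocycle can be corrected step by step along the path.
-/

open Finset

/-- Coefficient `a_k` of `D_k` in `D(b) = ∑_{i=1}^{n-1} b_i D(i)`. -/
def acoef (n : ℕ) (b : ℕ → ℕ) (kk : ℕ) : ℤ :=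
  ∑ j ∈ Icc (n + 1 - kk) (n - 1), ((j : ℤ) + (kk : ℤ) - (n : ℤ)) * (b j : ℤ)

/-- Lattice points of the sections of `O(D(b))` over the chart `X_c` (cone with rays
`v_{c-1}, v_c`), for `1 ≤ c ≤ n`. -/
def Esec (n : ℕ) (b : ℕ → ℕ) (c : ℕ) : Set (ℤ × ℤ) :=
  {u | 0 ≤ u.1 + ((c : ℤ) - 1) * u.2 + acoef n b (c - 1)
     ∧ 0 ≤ u.1 + (c : ℤ) * u.2 + acoef n b c}

/-- Lattice points of the sections of `O(D(b))` over `X_c ∩ X_{c'}`: for adjacent charts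
the intersection is the ray `v_c` (resp. `v_{c'}`); non-adjacent charts meet in the
dense torus, giving all of `ℤ²`. -/
def Epair (n : ℕ) (b : ℕ → ℕ) (c c' : ℕ) : Set (ℤ × ℤ) :=
  if c' = c + 1 then {u | 0 ≤ u.1 + (c : ℤ) * u.2 + acoef n b c}
  else if c = c' + 1 then {u | 0 ≤ u.1 + (c' : ℤ) * u.2 + acoef n b c'}
  else Set.univ

/-- The cone `σ_{i+1}` of the fan, spanned by `v_i = (1,i)` and `v_{i+1} = (1,i+1)`. -/
def fanCone (i : ℕ) : Set (ℝ × ℝ) :=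
  {w | (i : ℝ) * w.1 ≤ w.2 ∧ w.2 ≤ ((i : ℝ) + 1) * w.1}

section DiscreteConvexity

variable {R : Type*} [CommRing R] [LinearOrder R] [IsStrictOrderedRing R] {F : ℕ → R}

theorem tangent_le_of_monotone_sub (hF : Monotone fun k => F (k + 1) - F k) (m j : ℕ) :
    F m + ((j : R) - m) * (F (m + 1) - F m) ≤ F j := by
  rcases le_total m j with hmj | hjm
  · have hsum := card_nsmul_le_sum (Ico m j) (fun k => F (k + 1) - F k) (F (m + 1) - F m)
      fun k hk => hF (mem_Ico.1 hk).1
    rw [sum_Ico_sub F hmj, Nat.card_Ico, nsmul_eq_mul, Nat.cast_sub hmj] at hsum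
    linarith
  · have hsum := sum_le_card_nsmul (Ico j m) (fun k => F (k + 1) - F k) (F (m + 1) - F m)
      fun k hk => hF (mem_Ico.1 hk).2.le
    rw [sum_Ico_sub F hjm, Nat.card_Ico, nsmul_eq_mul, Nat.cast_sub hjm] at hsum
    linarith

theorem neg_of_le_of_le_of_monotone_sub (hF : Monotone fun k => F (k + 1) - F k)
    {j₀ d j₁ : ℕ} (h₀ : j₀ ≤ d) (h₁ : d ≤ j₁) (hF₀ : F j₀ < 0) (hF₁ : F j₁ < 0) : F d < 0 := by
  by_contra! hd
  have t₀ := tangent_le_of_monotone_sub hF d j₀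
  have t₁ := tangent_le_of_monotone_sub hF d j₁
  have c₀ : (j₀ : R) ≤ d := by exact_mod_cast h₀
  have c₁ : (d : R) ≤ j₁ := by exact_mod_cast h₁
  rcases le_total 0 (F (d + 1) - F d) with hs | hs
  · nlinarith [mul_nonneg (sub_nonneg.2 c₁) hs]
  · nlinarith [mul_nonneg (sub_nonneg.2 c₀) (neg_nonneg.2 hs)]

end DiscreteConvexity

theorem Finsupp.exists_forall_sub_mem_supported {ι α M : Type*} (R : Type*) [AddCommGroup M]
    [Semiring R] [Module R M] (s : Finset ι) (v : ι → α →₀ M) (S : ι → Set α)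
    (hv : ∀ u, ∀ i ∈ s, ∀ j ∈ s, u ∉ S i → u ∉ S j → v i u = v j u) :
    ∃ K : α →₀ M, ∀ i ∈ s, v i - K ∈ Finsupp.supported M R (S i) := by
  classical
  let pick (u : α) : M := if h : ∃ i ∈ s, u ∉ S i then v h.choose u else 0
  have hpick : ∀ u, pick u ≠ 0 → u ∈ s.biUnion fun i => (v i).support := by
    intro u hu
    by_cases h : ∃ i ∈ s, u ∉ S i
    · simp only [pick, dif_pos h] at hu
      exact mem_biUnion.2 ⟨_, h.choose_spec.1, Finsupp.mem_support_iff.2 hu⟩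
    · simp [pick, dif_neg h] at hu
  refine ⟨Finsupp.onFinset _ pick hpick, fun i hi => (Finsupp.mem_supported' R _).2 fun u hu => ?_⟩
  have h : ∃ i ∈ s, u ∉ S i := ⟨i, hi, hu⟩
  rw [Finsupp.sub_apply, Finsupp.onFinset_apply, sub_eq_zero]
  simp only [pick, dif_pos h]
  exact hv u i hi _ h.choose_spec.1 hu h.choose_spec.2

section Cech

variable {α M R : Type*} [AddCommGroup M] [Semiring R] [Module R M] {n : ℕ}

theorem exists_cech_primitive_of_one_cocycle (S : ℕ → Set α) (E : ℕ → ℕ → Set α)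
    (hSE : ∀ u c c' e, 1 ≤ c → c ≤ e → e < c' → u ∉ S c → u ∉ S c' → u ∉ E e (e + 1))
    (g : ℕ → ℕ → α →₀ M)
    (hg : ∀ c c', 1 ≤ c → c ≤ n → 1 ≤ c' → c' ≤ n → g c c' ∈ Finsupp.supported M R (E c c'))
    (hanti : ∀ c c', g c c' = - g c' c)
    (hcoc : ∀ c c' c'', 1 ≤ c → c ≤ n → 1 ≤ c' → c' ≤ n → 1 ≤ c'' → c'' ≤ n →
      g c c'' = g c c' + g c' c'') :
    ∃ f : ℕ → α →₀ M, (∀ c, 1 ≤ c → c ≤ n → f c ∈ Finsupp.supported M R (S c)) ∧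
      (∀ c c', 1 ≤ c → c ≤ n → 1 ≤ c' → c' ≤ n → g c c' = f c' - f c) := by
  have hchain : ∀ u c c', c ≤ c' → 1 ≤ c → c' ≤ n → u ∉ S c → u ∉ S c' →
      g 1 c u = g 1 c' u := by
    intro u c c' hcc' hc hc' hu hu'
    suffices ∀ e, c ≤ e → e ≤ c' → g 1 c u = g 1 e u from this c' hcc' le_rfl
    intro e hce
    induction e, hce using Nat.le_induction with
    | base => exact fun _ => rfl
    | succ e hce ih =>
      intro he
      have hen : e + 1 ≤ n := he.trans hc'
      have hzero : g e (e + 1) u = 0 :=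
        (Finsupp.mem_supported' R _).1 (hg e (e + 1) (by omega) (by omega) (by omega) hen)
          u (hSE u c c' e hc hce he hu hu')
      rw [ih (by omega), hcoc 1 e (e + 1) le_rfl (by omega) (by omega) (by omega) (by omega) hen,
        Finsupp.add_apply, hzero, add_zero]
  obtain ⟨K, hK⟩ := Finsupp.exists_forall_sub_mem_supported R (Icc 1 n) (g 1) S
    fun u c hc c' hc' hu hu' => by
      simp only [mem_Icc] at hc hc'
      rcases le_total c c' with h | h
      · exact hchain u c c' h hc.1 hc'.2 hu hu'
      · exact (hchain u c' c h hc'.1 hc.2 hu' hu).symm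
  refine ⟨fun c => g 1 c - K, fun c hc hcn => hK c (mem_Icc.2 ⟨hc, hcn⟩), ?_⟩
  intro c c' hc hcn hc' hcn'
  simp only [hcoc c 1 c' hc hcn le_rfl (hc.trans hcn) hc' hcn', hanti c 1]
  abel

theorem exists_cech_primitive_of_two_cocycle (E : ℕ → ℕ → Set α)
    (hE_swap : ∀ c, E (c + 1) c = E c (c + 1))
    (hE_far : ∀ c c', c' ≠ c + 1 → c ≠ c' + 1 → E c c' = Set.univ)
    (h : ℕ → ℕ → ℕ → α →₀ M)
    (hanti : ∀ c c' c'', h c c' c'' = - h c' c c'' ∧ h c c' c'' = - h c c'' c')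
    (hcoc : ∀ c c' c'' c''', 1 ≤ c → c ≤ n → 1 ≤ c' → c' ≤ n → 1 ≤ c'' → c'' ≤ n →
      1 ≤ c''' → c''' ≤ n → h c' c'' c''' - h c c'' c''' + h c c' c''' - h c c' c'' = 0) :
    ∃ g : ℕ → ℕ → α →₀ M,
      (∀ c c', 1 ≤ c → c ≤ n → 1 ≤ c' → c' ≤ n → g c c' ∈ Finsupp.supported M R (E c c')) ∧
      (∀ c c', g c c' = - g c' c) ∧
      (∀ c c' c'', 1 ≤ c → c ≤ n → 1 ≤ c' → c' ≤ n → 1 ≤ c'' → c'' ≤ n →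
        h c c' c'' = g c' c'' - g c c'' + g c c') := by
  classical
  -- `h 1` is a primitive of `h`; subtracting the coboundary of `f` makes it supported in `E`
  let excess (c : ℕ) : α →₀ M := (h 1 c (c + 1)).filter (· ∉ E c (c + 1))
  let f (c : ℕ) : α →₀ M := ∑ k ∈ range c, excess k
  let g (c c' : ℕ) : α →₀ M := h 1 c c' - (f c' - f c)
  have hg_anti (c c' : ℕ) : g c c' = - g c' c := by
    simp only [g, (hanti 1 c c').2]
    abel
  have hg_succ (c : ℕ) : g c (c + 1) ∈ Finsupp.supported M R (E c (c + 1)) := by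
    have hsplit := Finsupp.filter_add_filter_not (h 1 c (c + 1)) (· ∈ E c (c + 1))
    have : g c (c + 1) = (h 1 c (c + 1)).filter (· ∈ E c (c + 1)) := by
      simp only [g, f, sum_range_succ, add_sub_cancel_left]
      exact (eq_sub_of_add_eq hsplit).symm
    rw [this, Finsupp.mem_supported']
    exact fun u hu => Finsupp.filter_apply_neg _ _ hu
  refine ⟨g, fun c c' _ _ _ _ => ?_, hg_anti, fun c c' c'' hc hcn hc' hcn' hc'' hcn'' => ?_⟩
  · by_cases h₁ : c' = c + 1
    · subst h₁
      exact hg_succ c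
    by_cases h₂ : c = c' + 1
    · subst h₂
      rw [hg_anti, hE_swap, Finsupp.mem_supported']
      intro u hu
      rw [Finsupp.neg_apply, (Finsupp.mem_supported' R _).1 (hg_succ c') u hu, neg_zero]
    rw [hE_far c c' h₁ h₂, Finsupp.supported_univ]
    exact Submodule.mem_top
  · have := hcoc 1 c c' c'' le_rfl (hc.trans hcn) hc hcn hc' hcn' hc'' hcn''
    simp only [g]
    rw [← sub_eq_zero, ← this]
    abel

end Cech

section Coefficients

variable (n : ℕ) (b : ℕ → ℕ)

theorem acoef_succ_sub (k : ℕ) :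
    acoef n b (k + 1) - acoef n b k = ∑ j ∈ Icc (n - k) (n - 1), (b j : ℤ) := by
  -- the extra index `j = n - k` has coefficient `0`
  have hextend : acoef n b k = ∑ j ∈ Icc (n - k) (n - 1), ((j : ℤ) + k - n) * b j := by
    refine sum_subset (Icc_subset_Icc_left (by omega)) fun j hj hj' => ?_
    simp only [mem_Icc, not_and, not_le] at hj hj'
    have : (j : ℤ) + k - n = 0 := by omega
    simp [this]
  rw [hextend, acoef, Nat.add_sub_add_right, ← sum_sub_distrib]
  refine sum_congr rfl fun j _ => ?_
  push_cast
  ring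

theorem monotone_acoef_succ_sub : Monotone fun k => acoef n b (k + 1) - acoef n b k := by
  intro k l hkl
  simp only [acoef_succ_sub]
  exact sum_le_sum_of_subset_of_nonneg (Icc_subset_Icc_left (by omega)) fun _ _ _ => by positivity

/-- `rayOrder n b u j = ⟨u, v_j⟩ + a_j`: the character `χ^u` is a section of `O(D(b))` near the
generic point of `D_j` iff this is nonnegative. -/
def rayOrder (u : ℤ × ℤ) (j : ℕ) : ℤ := u.1 + j * u.2 + acoef n b j

theorem monotone_rayOrder_succ_sub (u : ℤ × ℤ) :
    Monotone fun k => rayOrder n b u (k + 1) - rayOrder n b u k := by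
  intro k l hkl
  have := monotone_acoef_succ_sub n b hkl
  simp only [rayOrder] at this ⊢
  push_cast
  linarith

theorem mem_Esec_iff {c : ℕ} (hc : 1 ≤ c) {u : ℤ × ℤ} :
    u ∈ Esec n b c ↔ 0 ≤ rayOrder n b u (c - 1) ∧ 0 ≤ rayOrder n b u c := by
  simp [Esec, rayOrder, Nat.cast_sub hc]

theorem mem_Epair_succ_iff {c : ℕ} {u : ℤ × ℤ} :
    u ∈ Epair n b c (c + 1) ↔ 0 ≤ rayOrder n b u c := by
  simp [Epair, rayOrder]

theorem Epair_succ_swap (c : ℕ) : Epair n b (c + 1) c = Epair n b c (c + 1) := by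
  simp [Epair, show c ≠ c + 1 + 1 by omega]

theorem Epair_eq_univ {c c' : ℕ} (h₁ : c' ≠ c + 1) (h₂ : c ≠ c' + 1) :
    Epair n b c c' = Set.univ := by
  simp [Epair, h₁, h₂]

/-- Since `j ↦ rayOrder n b u j` is convex, it is negative on the whole stretch between two
charts on which `χ^u` fails to be regular. -/
theorem notMem_Epair_succ_of_notMem_Esec (u : ℤ × ℤ) {c c' e : ℕ} (hc : 1 ≤ c) (hce : c ≤ e)
    (hec' : e < c') (hu : u ∉ Esec n b c) (hu' : u ∉ Esec n b c') : u ∉ Epair n b e (e + 1) := by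
  have hneg : ∀ {d}, 1 ≤ d → u ∉ Esec n b d →
      rayOrder n b u (d - 1) < 0 ∨ rayOrder n b u d < 0 := by
    intro d hd hud
    rw [mem_Esec_iff n b hd] at hud
    omega
  rw [mem_Epair_succ_iff, not_le]
  rcases hneg hc hu with h₀ | h₀ <;> rcases hneg (by omega) hu' with h₁ | h₁ <;>
    exact neg_of_le_of_le_of_monotone_sub (monotone_rayOrder_succ_sub n b u)
      (by omega) (by omega) h₀ h₁

/-- The character `m_i` with `⟨m_i, v_i⟩ = -a_i` and `⟨m_i, v_{i+1}⟩ = -a_{i+1}`, i.e. the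
linear function that `ψ_{D(b)}` restricts to on the cone spanned by `v_i` and `v_{i+1}`. -/
def tangentVec (i : ℕ) : ℤ × ℤ :=
  (i * (acoef n b (i + 1) - acoef n b i) - acoef n b i, acoef n b i - acoef n b (i + 1))

theorem rayOrder_tangentVec_self (i : ℕ) : rayOrder n b (tangentVec n b i) i = 0 := by
  simp only [rayOrder, tangentVec]
  ring

theorem rayOrder_tangentVec_succ (i : ℕ) : rayOrder n b (tangentVec n b i) (i + 1) = 0 := by
  simp only [rayOrder, tangentVec]
  push_cast
  ring

theorem rayOrder_tangentVec_nonneg (i j : ℕ) : 0 ≤ rayOrder n b (tangentVec n b i) j := by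
  have := tangent_le_of_monotone_sub (monotone_acoef_succ_sub n b) i j
  simp only [rayOrder, tangentVec]
  linarith

end Coefficients

section GlobalGeneration

variable (n : ℕ) (b : ℕ → ℕ)

theorem exists_globalSection_add_of_mem_Esec {c : ℕ} (hc : 1 ≤ c) {u : ℤ × ℤ}
    (hu : u ∈ Esec n b c) :
    ∃ g w : ℤ × ℤ, (∀ j : ℕ, 0 ≤ rayOrder n b g j) ∧
      (0 ≤ w.1 + ((c : ℤ) - 1) * w.2 ∧ 0 ≤ w.1 + (c : ℤ) * w.2) ∧ u = g + w := by
  obtain ⟨c, rfl⟩ := Nat.exists_eq_add_of_le' hc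
  rw [mem_Esec_iff n b hc, Nat.add_sub_cancel] at hu
  have h₀ := rayOrder_tangentVec_self n b c
  have h₁ := rayOrder_tangentVec_succ n b c
  refine ⟨tangentVec n b c, u - tangentVec n b c, rayOrder_tangentVec_nonneg n b c, ?_, by simp⟩
  simp only [rayOrder, Prod.fst_sub, Prod.snd_sub] at hu h₀ h₁ ⊢
  push_cast at hu h₁ ⊢
  constructor <;> linarith

end GlobalGeneration

section SupportFunction

def charPairing (m : ℤ × ℤ) : ℝ × ℝ →ₗ[ℝ] ℝ :=
  (m.1 : ℝ) • LinearMap.fst ℝ ℝ ℝ + (m.2 : ℝ) • LinearMap.snd ℝ ℝ ℝ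

@[simp]
theorem charPairing_apply (m : ℤ × ℤ) (w : ℝ × ℝ) : charPairing m w = m.1 * w.1 + m.2 * w.2 := by
  simp [charPairing]

variable (n : ℕ) (b : ℕ → ℕ)

theorem charPairing_ray (m : ℤ × ℤ) (j : ℕ) :
    charPairing m (1, j) = rayOrder n b m j - acoef n b j := by
  simp only [charPairing_apply, rayOrder]
  push_cast
  ring

def supportFun : ℝ × ℝ → ℝ :=
  (range (n + 1)).inf' nonempty_range_add_one fun i => ⇑(charPairing (tangentVec n b i))

theorem supportFun_le {i : ℕ} (hi : i ≤ n) (w : ℝ × ℝ) :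
    supportFun n b w ≤ charPairing (tangentVec n b i) w := by
  rw [supportFun, Finset.inf'_apply]
  exact inf'_le _ (mem_range_succ_iff.2 hi)

theorem charPairing_tangentVec_le_of_mem_fanCone {i : ℕ} {w : ℝ × ℝ} (hw : w ∈ fanCone i)
    (i' : ℕ) : charPairing (tangentVec n b i) w ≤ charPairing (tangentVec n b i') w := by
  obtain ⟨hw₀, hw₁⟩ := hw
  have hα : 0 ≤ ((i : ℝ) + 1) * w.1 - w.2 := by linarith
  have hβ : 0 ≤ w.2 - i * w.1 := by linarith
  -- `w = α v_i + β v_{i+1}` with `α, β ≥ 0`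
  have hdecomp (m : ℤ × ℤ) : charPairing m w = (((i : ℝ) + 1) * w.1 - w.2) * charPairing m (1, i)
      + (w.2 - i * w.1) * charPairing m (1, ((i + 1 : ℕ) : ℝ)) := by
    simp only [charPairing_apply]
    push_cast
    ring
  rw [hdecomp, hdecomp, charPairing_ray n b, charPairing_ray n b, charPairing_ray n b,
    charPairing_ray n b, rayOrder_tangentVec_self, rayOrder_tangentVec_succ]
  have h₀ : (0 : ℝ) ≤ rayOrder n b (tangentVec n b i') i := by
    exact_mod_cast rayOrder_tangentVec_nonneg n b i' i
  have h₁ : (0 : ℝ) ≤ rayOrder n b (tangentVec n b i') (i + 1) := by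
    exact_mod_cast rayOrder_tangentVec_nonneg n b i' (i + 1)
  push_cast
  nlinarith [mul_nonneg hα h₀, mul_nonneg hβ h₁]

theorem supportFun_eq_on_fanCone {i : ℕ} (hi : i ≤ n) {w : ℝ × ℝ} (hw : w ∈ fanCone i) :
    supportFun n b w = charPairing (tangentVec n b i) w := by
  refine (supportFun_le n b hi w).antisymm ?_
  rw [supportFun, Finset.inf'_apply]
  exact le_inf' _ _ fun i' _ => charPairing_tangentVec_le_of_mem_fanCone n b hw i'

theorem supportFun_ray {j : ℕ} (hj : j ≤ n) : supportFun n b (1, j) = -(acoef n b j : ℝ) := by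
  refine le_antisymm ?_ ?_
  · simpa [charPairing_ray n b, rayOrder_tangentVec_self] using supportFun_le n b hj (1, j)
  · rw [supportFun, Finset.inf'_apply]
    refine le_inf' _ _ fun i _ => ?_
    have : (0 : ℝ) ≤ rayOrder n b (tangentVec n b i) j := by
      exact_mod_cast rayOrder_tangentVec_nonneg n b i j
    rw [charPairing_ray n b]
    linarith

theorem concaveOn_supportFun {s : Set (ℝ × ℝ)} (hs : Convex ℝ s) :
    ConcaveOn ℝ s (supportFun n b) :=
  inf'_induction _ _ (fun _ hf _ hg => hf.inf hg) fun _ _ => (charPairing _).concaveOn hs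

end SupportFunction

theorem convex_setOf_nonneg_snd_le_mul_fst (a : ℝ) :
    Convex ℝ {w : ℝ × ℝ | 0 ≤ w.2 ∧ w.2 ≤ a * w.1} := by
  rintro x ⟨hx₀, hx₁⟩ y ⟨hy₀, hy₁⟩ s t hs ht -
  simp only [Set.mem_ofPred_eq, Prod.fst_add, Prod.snd_add, Prod.smul_fst, Prod.smul_snd,
    smul_eq_mul]
  constructor <;> nlinarith [mul_le_mul_of_nonneg_left hx₁ hs, mul_le_mul_of_nonneg_left hy₁ ht]

theorem statement11_general (n : ℕ) (b : ℕ → ℕ) :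
    -- (i) existence of a convex support function
    (∃ ψ : ℝ × ℝ → ℝ,
      (∀ i : ℕ, i < n → ∃ u : ℝ × ℝ, ∀ w ∈ fanCone i, ψ w = u.1 * w.1 + u.2 * w.2) ∧
      (∀ j : ℕ, j ≤ n → ψ (1, (j : ℝ)) = -(acoef n b j : ℝ)) ∧
      ConcaveOn ℝ {w : ℝ × ℝ | 0 ≤ w.2 ∧ w.2 ≤ (n : ℝ) * w.1} ψ)
    -- (ii) O(D(b)) is generated by global sections
    ∧ (∀ c : ℕ, 1 ≤ c → c ≤ n → ∀ u ∈ Esec n b c,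
        ∃ g w : ℤ × ℤ,
          (∀ j : ℕ, j ≤ n → 0 ≤ g.1 + (j : ℤ) * g.2 + acoef n b j) ∧
          (0 ≤ w.1 + ((c : ℤ) - 1) * w.2 ∧ 0 ≤ w.1 + (c : ℤ) * w.2) ∧
          u = g + w)
    -- (iii) vanishing of H^1 (Čech, for the affine cover by the charts X_c)
    ∧ (∀ g : ℕ → ℕ → ((ℤ × ℤ) →₀ ℂ),
        (∀ c c', 1 ≤ c → c ≤ n → 1 ≤ c' → c' ≤ n →
          g c c' ∈ Finsupp.supported ℂ ℂ (Epair n b c c')) →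
        (∀ c c', g c c' = - g c' c) →
        (∀ c c' c'', 1 ≤ c → c ≤ n → 1 ≤ c' → c' ≤ n → 1 ≤ c'' → c'' ≤ n →
          g c c'' = g c c' + g c' c'') →
        ∃ f : ℕ → ((ℤ × ℤ) →₀ ℂ),
          (∀ c, 1 ≤ c → c ≤ n → f c ∈ Finsupp.supported ℂ ℂ (Esec n b c)) ∧
          (∀ c c', 1 ≤ c → c ≤ n → 1 ≤ c' → c' ≤ n → g c c' = f c' - f c))
    -- (iii') vanishing of H^2 (Čech; sections over triple intersections are the full
    -- Laurent algebra, since triple intersections of the cones are {0})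
    ∧ (∀ h : ℕ → ℕ → ℕ → ((ℤ × ℤ) →₀ ℂ),
        (∀ c c' c'', h c c' c'' = - h c' c c'' ∧ h c c' c'' = - h c c'' c') →
        (∀ c c' c'' c''', 1 ≤ c → c ≤ n → 1 ≤ c' → c' ≤ n → 1 ≤ c'' → c'' ≤ n →
          1 ≤ c''' → c''' ≤ n →
          h c' c'' c''' - h c c'' c''' + h c c' c''' - h c c' c'' = 0) →
        ∃ g : ℕ → ℕ → ((ℤ × ℤ) →₀ ℂ),
          (∀ c c', 1 ≤ c → c ≤ n → 1 ≤ c' → c' ≤ n →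
            g c c' ∈ Finsupp.supported ℂ ℂ (Epair n b c c')) ∧
          (∀ c c', g c c' = - g c' c) ∧
          (∀ c c' c'', 1 ≤ c → c ≤ n → 1 ≤ c' → c' ≤ n → 1 ≤ c'' → c'' ≤ n →
            h c c' c'' = g c' c'' - g c c'' + g c c')) := by
  refine ⟨⟨supportFun n b, fun i hi => ?_, fun j hj => supportFun_ray n b hj,
    concaveOn_supportFun n b (convex_setOf_nonneg_snd_le_mul_fst n)⟩, fun c hc _ u hu => ?_,
    fun g => exists_cech_primitive_of_one_cocycle (Esec n b) (Epair n b)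
      (fun u _ _ _ => notMem_Epair_succ_of_notMem_Esec n b u) g,
    fun h => exists_cech_primitive_of_two_cocycle (Epair n b) (Epair_succ_swap n b)
      (fun _ _ => Epair_eq_univ n b) h⟩
  · exact ⟨((tangentVec n b i).1, (tangentVec n b i).2), fun w hw =>
      (supportFun_eq_on_fanCone n b hi.le hw).trans (charPairing_apply _ _)⟩
  · obtain ⟨g, w, hg, hw, rfl⟩ := exists_globalSection_add_of_mem_Esec n b hc hu
    exact ⟨g, w, fun j _ => hg j, hw, rfl⟩

/-- For `b ∈ ℕ^{n-1}`, the divisor `D(b)` on the toric resolution `X` of the `A_{n-1}`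
singularity has a convex (= concave in Mathlib's convention, following [F]) support
function `ψ_{D(b)}`, i.e. a function that is linear on each maximal cone of the fan and
takes value `−a_j` at each ray generator `v_j = (1,j)`; consequently `O(D(b))` is
generated by its global sections (every local section over a chart is a global section
times a regular function on the chart), and `H^i(X, O(D(b))) = 0` for `i > 0` — on the
surface `X`, Čech `H^1` and `H^2` for the affine cover `{X_c}_{c=1}^n` vanish. -/
theorem statement11 (n : ℕ) (hn : 1 ≤ n) (b : ℕ → ℕ) :
    -- (i) existence of a convex support function
    (∃ ψ : ℝ × ℝ → ℝ,
      (∀ i : ℕ, i < n → ∃ u : ℝ × ℝ, ∀ w ∈ fanCone i, ψ w = u.1 * w.1 + u.2 * w.2) ∧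
      (∀ j : ℕ, j ≤ n → ψ (1, (j : ℝ)) = -(acoef n b j : ℝ)) ∧
      ConcaveOn ℝ {w : ℝ × ℝ | 0 ≤ w.2 ∧ w.2 ≤ (n : ℝ) * w.1} ψ)
    -- (ii) O(D(b)) is generated by global sections
    ∧ (∀ c : ℕ, 1 ≤ c → c ≤ n → ∀ u ∈ Esec n b c,
        ∃ g w : ℤ × ℤ,
          (∀ j : ℕ, j ≤ n → 0 ≤ g.1 + (j : ℤ) * g.2 + acoef n b j) ∧
          (0 ≤ w.1 + ((c : ℤ) - 1) * w.2 ∧ 0 ≤ w.1 + (c : ℤ) * w.2) ∧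
          u = g + w)
    -- (iii) vanishing of H^1 (Čech, for the affine cover by the charts X_c)
    ∧ (∀ g : ℕ → ℕ → ((ℤ × ℤ) →₀ ℂ),
        (∀ c c', 1 ≤ c → c ≤ n → 1 ≤ c' → c' ≤ n →
          g c c' ∈ Finsupp.supported ℂ ℂ (Epair n b c c')) →
        (∀ c c', g c c' = - g c' c) →
        (∀ c c' c'', 1 ≤ c → c ≤ n → 1 ≤ c' → c' ≤ n → 1 ≤ c'' → c'' ≤ n →
          g c c'' = g c c' + g c' c'') →
        ∃ f : ℕ → ((ℤ × ℤ) →₀ ℂ),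
          (∀ c, 1 ≤ c → c ≤ n → f c ∈ Finsupp.supported ℂ ℂ (Esec n b c)) ∧
          (∀ c c', 1 ≤ c → c ≤ n → 1 ≤ c' → c' ≤ n → g c c' = f c' - f c))
    -- (iii') vanishing of H^2 (Čech; sections over triple intersections are the full
    -- Laurent algebra, since triple intersections of the cones are {0})
    ∧ (∀ h : ℕ → ℕ → ℕ → ((ℤ × ℤ) →₀ ℂ),
        (∀ c c' c'', h c c' c'' = - h c' c c'' ∧ h c c' c'' = - h c c'' c') →
        (∀ c c' c'' c''', 1 ≤ c → c ≤ n → 1 ≤ c' → c' ≤ n → 1 ≤ c'' → c'' ≤ n →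
          1 ≤ c''' → c''' ≤ n →
          h c' c'' c''' - h c c'' c''' + h c c' c''' - h c c' c'' = 0) →
        ∃ g : ℕ → ℕ → ((ℤ × ℤ) →₀ ℂ),
          (∀ c c', 1 ≤ c → c ≤ n → 1 ≤ c' → c' ≤ n →
            g c c' ∈ Finsupp.supported ℂ ℂ (Epair n b c c')) ∧
          (∀ c c', g c c' = - g c' c) ∧
          (∀ c c' c'', 1 ≤ c → c ≤ n → 1 ≤ c' → c' ≤ n → 1 ≤ c'' → c'' ≤ n →
            h c c' c'' = g c' c'' - g c c'' + g c c')) :=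
  statement11_general n b
end

section
/- For b, c ∈ N^{n-1}: H^0(X, O(D(b)))·H^0(X, O(D(c))) = H^0(X, O(D(b+c))), i.e. the multiplication map on global sections of these nef toric divisors is surjective. -/
open Finset

/-- Lattice points of `H^0(X, O(D(b)))`: monomial exponents `u` with
`⟨u, v_j⟩ ≥ −a_j` for all rays `v_j = (1, j)`, `0 ≤ j ≤ n`. -/
def Psec (n : ℕ) (b : ℕ → ℕ) : Set (ℤ × ℤ) :=
  {u | ∀ j : ℕ, j ≤ n → 0 ≤ u.1 + (j : ℤ) * u.2 + acoef n b j}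

/-- `H^0(X, O(D(b)))` realized as the span of its monomials inside the Laurent
polynomial algebra `ℂ[x^{±1}, z^{±1}]`. -/
noncomputable def H0span (n : ℕ) (b : ℕ → ℕ) :
    Submodule ℂ (AddMonoidAlgebra ℂ (ℤ × ℤ)) :=
  Submodule.span ℂ {x | ∃ u ∈ Psec n b, x = AddMonoidAlgebra.single u (1 : ℂ)}

/-!
The coefficients `a_k` form a convex sequence: `a_0 = 0` and its increments
`a_{k+1} - a_k = ∑_{j ≥ n-k} b_j` are nondecreasing. So `Psec n b` is the set of lattice points
of a polygon cut out by the tangent lines of a convex piecewise linear function with integral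
slopes. For `u = (x, t)` in the polygon of `b + c`, pick a vertex `j₀` at which `-t` is a
subgradient of `a(b + c)`; since subdifferentials add, `-t` splits as `s₁ + s₂` with `s₁, s₂`
integral subgradients of `a(b)` and `a(c)` at the same `j₀`, and the tangent points with
slopes `-s₁, -s₂` give `u = v + w` with `v ∈ Psec n b` and `w ∈ Psec n c`.
-/

open Pointwise

def slopePolygon (n : ℕ) (d : ℕ → ℤ) : Set (ℤ × ℤ) :=
  {u | ∀ j ≤ n, 0 ≤ u.1 + j * u.2 + ∑ i ∈ range j, d i}

/-- `s` is a subgradient at `j₀` of the convex function `j ↦ ∑ i ∈ range j, d i` on `[0, n]`. -/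
def IsSubgradientAt (d : ℕ → ℤ) (n j₀ : ℕ) (s : ℤ) : Prop :=
  (0 < j₀ → d (j₀ - 1) ≤ s) ∧ (j₀ < n → s ≤ d j₀)

section SlopePolygon

variable {d e : ℕ → ℤ} {n : ℕ}

lemma IsSubgradientAt.mul_le_sum_range_sub (hd : Monotone d) {j₀ : ℕ} {s : ℤ}
    (hs : IsSubgradientAt d n j₀ s) {j : ℕ} (hj : j ≤ n) :
    ((j : ℤ) - j₀) * s ≤ ∑ i ∈ range j, d i - ∑ i ∈ range j₀, d i := by
  rcases le_total j₀ j with h | h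
  · calc ((j : ℤ) - j₀) * s = ∑ _i ∈ Ico j₀ j, s := by simp [h]
      _ ≤ ∑ i ∈ Ico j₀ j, d i := sum_le_sum fun i hi => by
          rw [mem_Ico] at hi
          exact (hs.2 (by omega)).trans (hd hi.1)
      _ = _ := sum_Ico_eq_sub _ h
  · calc ((j : ℤ) - j₀) * s = -∑ _i ∈ Ico j j₀, s := by simp [h]; ring
      _ ≤ -∑ i ∈ Ico j j₀, d i := neg_le_neg <| sum_le_sum fun i hi => by
          rw [mem_Ico] at hi
          exact (hd (by omega : i ≤ j₀ - 1)).trans (hs.1 (by omega))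
      _ = _ := by rw [sum_Ico_eq_sub _ h, neg_sub]

lemma exists_isSubgradientAt_add (hd : Monotone d) (he : Monotone e) (n : ℕ) (s : ℤ) :
    ∃ j₀ ≤ n, ∃ s₁ s₂, s₁ + s₂ = s ∧ IsSubgradientAt d n j₀ s₁ ∧ IsSubgradientAt e n j₀ s₂ := by
  classical
  have hex : ∃ j, j = n ∨ s ≤ d j + e j := ⟨n, .inl rfl⟩
  set j₀ := Nat.find hex
  have hj₀ : j₀ ≤ n := Nat.find_min' hex (.inl rfl)
  have hspec : j₀ < n → s ≤ d j₀ + e j₀ := fun h => (Nat.find_spec hex).resolve_left h.ne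
  have hmin : 0 < j₀ → d (j₀ - 1) + e (j₀ - 1) < s := fun h => by
    have := Nat.find_min hex (show j₀ - 1 < j₀ by omega)
    exact not_le.mp (not_or.mp this).2
  -- for `j₀ = 0` the truncated `d (j₀ - 1) = d 0` is still a valid choice
  set s₁ := max (d (j₀ - 1)) (s - e j₀)
  have hd₁ : d (j₀ - 1) ≤ d j₀ := hd (Nat.sub_le j₀ 1)
  have he₁ : e (j₀ - 1) ≤ e j₀ := he (Nat.sub_le j₀ 1)
  refine ⟨j₀, hj₀, s₁, s - s₁, by ring, ⟨fun _ => le_max_left _ _, fun h => ?_⟩,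
    ⟨fun h => ?_, fun _ => by linarith [le_max_right (d (j₀ - 1)) (s - e j₀)]⟩⟩
  · exact max_le hd₁ (by linarith [hspec h])
  · have := max_le (by linarith [hmin h] : d (j₀ - 1) ≤ s - e (j₀ - 1))
      (by linarith : s - e j₀ ≤ s - e (j₀ - 1))
    linarith

lemma slopePolygon_add (hd : Monotone d) (he : Monotone e) :
    slopePolygon n d + slopePolygon n e = slopePolygon n (d + e) := by
  ext u
  constructor
  · rintro ⟨v, hv, w, hw, rfl⟩ j hj
    have hvj := hv j hj
    have hwj := hw j hj
    simp only [Prod.fst_add, Prod.snd_add, Pi.add_apply, sum_add_distrib]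
    linarith
  · intro hu
    obtain ⟨j₀, hj₀, s₁, s₂, hs, h₁, h₂⟩ := exists_isSubgradientAt_add hd he n (-u.2)
    let v : ℤ × ℤ := (j₀ * s₁ - ∑ i ∈ range j₀, d i, -s₁)
    refine ⟨v, fun j hj => ?_, u - v, fun j hj => ?_, add_sub_cancel v u⟩
    · have := h₁.mul_le_sum_range_sub hd hj
      simp only [v]
      linarith
    · have hc := h₂.mul_le_sum_range_sub he hj
      have hu₀ := hu j₀ hj₀
      simp only [Pi.add_apply, sum_add_distrib] at hu₀
      simp only [v, Prod.fst_sub, Prod.snd_sub]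
      rw [show u.2 = -s₁ - s₂ by linarith] at hu₀ ⊢
      linarith

end SlopePolygon

def acoefSlope (n : ℕ) (b : ℕ → ℕ) (k : ℕ) : ℤ :=
  ∑ j ∈ Icc (n - k) (n - 1), (b j : ℤ)

lemma monotone_acoefSlope (n : ℕ) (b : ℕ → ℕ) : Monotone (acoefSlope n b) :=
  fun _ _ h => sum_le_sum_of_subset_of_nonneg (Icc_subset_Icc (by omega) le_rfl)
    fun _ _ _ => by positivity

lemma acoefSlope_add (n : ℕ) (b c : ℕ → ℕ) :
    acoefSlope n (fun j => b j + c j) = acoefSlope n b + acoefSlope n c := by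
  funext k
  simp [acoefSlope, sum_add_distrib]

lemma acoef_succ {n k : ℕ} (b : ℕ → ℕ) (hk : k < n) :
    acoef n b (k + 1) = acoef n b k + acoefSlope n b k := by
  have hext : acoef n b k = ∑ j ∈ Icc (n - k) (n - 1), ((j : ℤ) + k - n) * b j := by
    refine sum_subset (Icc_subset_Icc (by omega) le_rfl) fun j hj hj' => ?_
    rw [mem_Icc] at hj hj'
    rw [show (j : ℤ) + k - n = 0 by omega, zero_mul]
  rw [acoef, show n + 1 - (k + 1) = n - k by omega, hext, acoefSlope, ← sum_add_distrib]
  exact sum_congr rfl fun j _ => by push_cast; ring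

lemma acoef_eq_sum_range {n k : ℕ} (b : ℕ → ℕ) (hk : k ≤ n) :
    acoef n b k = ∑ i ∈ range k, acoefSlope n b i := by
  induction k with
  | zero => simp [acoef]
  | succ k ih => rw [sum_range_succ, acoef_succ b hk, ih (by omega)]

lemma Psec_eq_slopePolygon (n : ℕ) (b : ℕ → ℕ) : Psec n b = slopePolygon n (acoefSlope n b) :=
  Set.ext fun _ => forall₂_congr fun _ hj => by rw [acoef_eq_sum_range b hj]

lemma span_single_mul_span_single {k G : Type*} [CommSemiring k] [AddMonoid G] (s t : Set G) :
    Submodule.span k {x | ∃ u ∈ s, x = AddMonoidAlgebra.single u (1 : k)} *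
        Submodule.span k {x | ∃ u ∈ t, x = AddMonoidAlgebra.single u (1 : k)} =
      Submodule.span k {x | ∃ u ∈ s + t, x = AddMonoidAlgebra.single u (1 : k)} := by
  rw [Submodule.span_mul_span]
  congr 1
  ext x
  simp only [Set.mem_mul, Set.mem_add, Set.mem_ofPred_eq]
  constructor
  · rintro ⟨_, ⟨v, hv, rfl⟩, _, ⟨w, hw, rfl⟩, rfl⟩
    exact ⟨v + w, ⟨v, hv, w, hw, rfl⟩, by rw [AddMonoidAlgebra.single_mul_single, one_mul]⟩
  · rintro ⟨_, ⟨v, hv, w, hw, rfl⟩, rfl⟩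
    exact ⟨_, ⟨v, hv, rfl⟩, _, ⟨w, hw, rfl⟩, by rw [AddMonoidAlgebra.single_mul_single, one_mul]⟩

theorem statement12_general (n : ℕ) (b c : ℕ → ℕ) :
    H0span n b * H0span n c = H0span n (fun j => b j + c j) := by
  rw [H0span, H0span, H0span, span_single_mul_span_single, Psec_eq_slopePolygon,
    Psec_eq_slopePolygon, Psec_eq_slopePolygon, acoefSlope_add,
    slopePolygon_add (monotone_acoefSlope n b) (monotone_acoefSlope n c)]

/-- For `b, c ∈ ℕ^{n-1}`:
`H^0(X, O(D(b))) · H^0(X, O(D(c))) = H^0(X, O(D(b+c)))`, i.e. multiplication of global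
sections of these nef toric divisors is surjective. -/
theorem statement12 (n : ℕ) (hn : 1 ≤ n) (b c : ℕ → ℕ) :
    H0span n b * H0span n c = H0span n (fun j => b j + c j) :=
  statement12_general n b c
end

section
/- Let R, S be subrings of a C-algebra Q, and let B (an (R,S)-bimodule) and C (an (S,R)-bimodule) give inverse equivalences B⊗_S− : S-mod → R-mod and C⊗_R− : R-mod → S-mod. Let T be a multiplicatively closed subset of both R and S which is a left Ore set in R, and suppose C satisfies the Ore condition: for all t ∈ T, c ∈ C there exist t' ∈ T, c' ∈ C with c't = t'c. Then: (1) if an R-module N is T-torsion, so is the S-module C ⊗_R N; (2) if an S-module M is T-torsion-free, so is the R-module B ⊗_S M. -/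
/-!
Write `c ⊗ n` for the class of a generator and `t·` for the endomorphism `c ⊗ n ↦ (t c) ⊗ n`.

(1) Given `t₂ ∈ T` and a generator `c ⊗ n` with `t₀ • n = 0`, the Ore condition on `C` gives
`c' t₀ = t₃ (t₂ c)`, so `(t₃ t₂)·(c ⊗ n) = c' ⊗ t₀ n = 0`; since `t₃ t₂` still kills whatever `t₂`
killed, an induction over the generators of `z` finds one `t ∈ T` killing `z`.

(2) For `c ∈ C` let `ψ_c : B ⊗ M → M`, `b ⊗ m ↦ (c b) m`. If `c' t = t' c` then
`ψ_{c'} ∘ t· = t' • ψ_c`, so when `t·x = 0` every `ψ_c x` is `T`-torsion, hence zero. Since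
`(b c)· = (b ⊗ −) ∘ ψ_c` and `1 ∈ B C`, writing `1 = ∑ bᵢ cᵢ` gives `x = ∑ bᵢ ⊗ ψ_{cᵢ} x = 0`.
-/

noncomputable def tensorRel (Q : Type*) [Ring Q] [Algebra ℂ Q] (R : Subalgebra ℂ Q)
    (C : Submodule ℂ Q) (N : Type*) [AddCommGroup N] [Module ↥R N] :
    AddSubgroup ((↥C × N) →₀ ℤ) :=
  AddSubgroup.closure
    ({x | ∃ c₁ c₂ c₁₂ : ↥C, ∃ n : N, (c₁₂ : Q) = (c₁ : Q) + (c₂ : Q) ∧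
        x = Finsupp.single (c₁₂, n) 1 - Finsupp.single (c₁, n) 1
            - Finsupp.single (c₂, n) 1}
      ∪ {x | ∃ c : ↥C, ∃ n₁ n₂ : N,
        x = Finsupp.single (c, n₁ + n₂) 1 - Finsupp.single (c, n₁) 1
            - Finsupp.single (c, n₂) 1}
      ∪ {x | ∃ c cr : ↥C, ∃ r : ↥R, ∃ n : N, (cr : Q) = (c : Q) * (r : Q) ∧
        x = Finsupp.single (cr, n) 1 - Finsupp.single (c, r • n) 1})

abbrev BalancedTensor (Q : Type*) [Ring Q] [Algebra ℂ Q] (R : Subalgebra ℂ Q)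
    (C : Submodule ℂ Q) (N : Type*) [AddCommGroup N] [Module ↥R N] : Type _ :=
  ((↥C × N) →₀ ℤ) ⧸ tensorRel Q R C N

namespace BalancedTensor

noncomputable section

variable {Q : Type*} [Ring Q] [Algebra ℂ Q] {R : Subalgebra ℂ Q} {C : Submodule ℂ Q}
  {N : Type*} [AddCommGroup N] [Module ↥R N]

def tmul (c : C) (n : N) : BalancedTensor Q R C N :=
  QuotientAddGroup.mk (Finsupp.single (c, n) 1)

theorem tmul_eq_add_left {c₁ c₂ c₁₂ : C} (h : (c₁₂ : Q) = c₁ + c₂) (n : N) :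
    tmul (R := R) c₁₂ n = tmul c₁ n + tmul c₂ n := by
  rw [tmul, tmul, tmul, ← QuotientAddGroup.mk_add, QuotientAddGroup.eq_iff_sub_mem,
    sub_add_eq_sub_sub]
  exact AddSubgroup.subset_closure (Or.inl (Or.inl ⟨c₁, c₂, c₁₂, n, h, rfl⟩))

theorem tmul_add_right (c : C) (n₁ n₂ : N) :
    tmul (R := R) c (n₁ + n₂) = tmul c n₁ + tmul c n₂ := by
  rw [tmul, tmul, tmul, ← QuotientAddGroup.mk_add, QuotientAddGroup.eq_iff_sub_mem,
    sub_add_eq_sub_sub]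
  exact AddSubgroup.subset_closure (Or.inl (Or.inr ⟨c, n₁, n₂, rfl⟩))

theorem tmul_eq_tmul_smul {c cr : C} {r : R} (h : (cr : Q) = c * r) (n : N) :
    tmul (R := R) cr n = tmul c (r • n) := by
  rw [tmul, tmul, QuotientAddGroup.eq_iff_sub_mem]
  exact AddSubgroup.subset_closure (Or.inr ⟨c, cr, r, n, h, rfl⟩)

@[simp]
theorem tmul_zero (c : C) : tmul (R := R) c (0 : N) = 0 := by
  simpa using tmul_add_right (R := R) c (0 : N) 0

theorem mk_single (p : ↥C × N) (a : ℤ) :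
    (QuotientAddGroup.mk (Finsupp.single p a) : BalancedTensor Q R C N) = a • tmul p.1 p.2 := by
  rw [tmul, ← QuotientAddGroup.mk_zsmul, Finsupp.smul_single, smul_eq_mul, mul_one]

theorem hom_ext {H : Type*} [AddCommGroup H] {φ ψ : BalancedTensor Q R C N →+ H}
    (h : ∀ c n, φ (tmul c n) = ψ (tmul c n)) : φ = ψ :=
  QuotientAddGroup.addMonoidHom_ext _ <|
    Finsupp.addHom_ext' fun p => AddMonoidHom.ext_int (h p.1 p.2)

def tmulRight (c : C) : N →+ BalancedTensor Q R C N :=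
  AddMonoidHom.mk' (tmul c) (tmul_add_right c)

@[simp]
theorem tmulRight_apply (c : C) (n : N) : tmulRight (R := R) c n = tmul c n := rfl

def lift {H : Type*} [AddCommGroup H] (f : C → N → H)
    (add_left : ∀ (c₁ c₂ c₁₂ : C) n, (c₁₂ : Q) = c₁ + c₂ → f c₁₂ n = f c₁ n + f c₂ n)
    (add_right : ∀ c n₁ n₂, f c (n₁ + n₂) = f c n₁ + f c n₂)
    (balanced : ∀ (c cr : C) (r : R) n, (cr : Q) = c * r → f cr n = f c (r • n)) :
    BalancedTensor Q R C N →+ H :=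
  QuotientAddGroup.lift _ (Finsupp.liftAddHom fun p => zmultiplesHom H (f p.1 p.2)) <| by
    rw [tensorRel, AddSubgroup.closure_le]
    rintro x ((⟨c₁, c₂, c₁₂, n, hc, rfl⟩ | ⟨c, n₁, n₂, rfl⟩) | ⟨c, cr, r, n, hc, rfl⟩) <;>
      simp only [SetLike.mem_coe, AddMonoidHom.mem_ker, map_sub,
        Finsupp.liftAddHom_apply_single, zmultiplesHom_apply, one_zsmul]
    · rw [add_left c₁ c₂ c₁₂ n hc]; abel
    · rw [add_right]; abel
    · rw [balanced c cr r n hc, sub_self]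

@[simp]
theorem lift_tmul {H : Type*} [AddCommGroup H] (f : C → N → H)
    (add_left : ∀ (c₁ c₂ c₁₂ : C) n, (c₁₂ : Q) = c₁ + c₂ → f c₁₂ n = f c₁ n + f c₂ n)
    (add_right : ∀ c n₁ n₂, f c (n₁ + n₂) = f c n₁ + f c n₂)
    (balanced : ∀ (c cr : C) (r : R) n, (cr : Q) = c * r → f cr n = f c (r • n))
    (c : C) (n : N) : lift f add_left add_right balanced (tmul c n) = f c n := by
  simp [lift, tmul]

def lmul (q : Q) (hq : ∀ x ∈ C, q * x ∈ C) : BalancedTensor Q R C N →+ BalancedTensor Q R C N :=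
  lift (fun c n => tmul (R := R) ⟨q * c, hq c c.2⟩ n)
    (fun _ _ _ _ h => tmul_eq_add_left (by simp [h, mul_add]) _)
    (fun _ => tmul_add_right _)
    (fun _ _ _ _ h => tmul_eq_tmul_smul (by simp [h, mul_assoc]) _)

@[simp]
theorem lmul_tmul (q : Q) (hq : ∀ x ∈ C, q * x ∈ C) (c : C) (n : N) :
    lmul q hq (tmul (R := R) c n) = tmul ⟨q * c, hq c c.2⟩ n :=
  lift_tmul ..

theorem lmul_mk (q : Q) (hq : ∀ x ∈ C, q * x ∈ C) (z : (↥C × N) →₀ ℤ) :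
    lmul (R := R) q hq (QuotientAddGroup.mk z) = QuotientAddGroup.mk
      (Finsupp.mapDomain (fun p : ↥C × N => ((⟨q * (p.1 : Q), hq _ p.1.2⟩ : ↥C), p.2)) z) := by
  have : (lmul (R := R) q hq).comp (QuotientAddGroup.mk' _) = (QuotientAddGroup.mk' _).comp
      (Finsupp.mapDomain.addMonoidHom fun p : ↥C × N => ((⟨q * p.1, hq _ p.1.2⟩ : ↥C), p.2)) :=
    Finsupp.addHom_ext' fun p => AddMonoidHom.ext_int <| by
      simp only [AddMonoidHom.comp_apply, Finsupp.singleAddHom_apply, QuotientAddGroup.mk'_apply,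
        Finsupp.mapDomain.addMonoidHom_apply, Finsupp.mapDomain_single]
      exact lmul_tmul q hq p.1 p.2
  exact DFunLike.congr_fun this z

theorem lmul_one (h : ∀ x ∈ C, 1 * x ∈ C) : lmul (R := R) (N := N) 1 h = AddMonoidHom.id _ := by
  refine hom_ext fun c n => ?_
  simp

theorem lmul_add {q₁ q₂ : Q} (h₁ : ∀ x ∈ C, q₁ * x ∈ C) (h₂ : ∀ x ∈ C, q₂ * x ∈ C)
    (h : ∀ x ∈ C, (q₁ + q₂) * x ∈ C) :
    lmul (R := R) (N := N) (q₁ + q₂) h = lmul q₁ h₁ + lmul q₂ h₂ := by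
  refine hom_ext fun c n => ?_
  simpa using tmul_eq_add_left (by simp [add_mul]) n

theorem lmul_mul {q₁ q₂ : Q} (h₁ : ∀ x ∈ C, q₁ * x ∈ C) (h₂ : ∀ x ∈ C, q₂ * x ∈ C)
    (h : ∀ x ∈ C, (q₁ * q₂) * x ∈ C) :
    lmul (R := R) (N := N) (q₁ * q₂) h = (lmul q₁ h₁).comp (lmul q₂ h₂) := by
  refine hom_ext fun c n => ?_
  simp [mul_assoc]

def contract (c : Q) (hc : ∀ x ∈ C, c * x ∈ R) : BalancedTensor Q R C N →+ N :=
  lift (fun x n => (⟨c * x, hc x x.2⟩ : R) • n)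
    (fun _ _ _ _ h => by rw [← add_smul]; congr 1; ext; simp [h, mul_add])
    (fun _ => smul_add _)
    (fun _ _ _ _ h => by rw [← mul_smul]; congr 1; ext; simp [h, mul_assoc])

@[simp]
theorem contract_tmul (c : Q) (hc : ∀ x ∈ C, c * x ∈ R) (x : C) (n : N) :
    contract c hc (tmul x n) = (⟨c * x, hc x x.2⟩ : R) • n :=
  lift_tmul ..

theorem lmul_mul_eq_tmulRight_comp_contract (b : C) {c : Q} (hc : ∀ x ∈ C, c * x ∈ R)
    (h : ∀ x ∈ C, b * c * x ∈ C) :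
    lmul (b * c) h = (tmulRight b).comp (contract (N := N) c hc) :=
  hom_ext fun x n => by simpa using tmul_eq_tmul_smul (by simp [mul_assoc]) n

theorem contract_comp_lmul {c c' t : Q} {s : R} (hOre : c' * t = s * c)
    (hc : ∀ x ∈ C, c * x ∈ R) (hc' : ∀ x ∈ C, c' * x ∈ R) (ht : ∀ x ∈ C, t * x ∈ C) :
    (contract (N := N) c' hc').comp (lmul t ht) =
      (DistribSMul.toAddMonoidHom N s).comp (contract c hc) :=
  hom_ext fun x n => by
    simp only [AddMonoidHom.comp_apply, lmul_tmul, contract_tmul,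
      DistribSMul.toAddMonoidHom_apply, ← mul_smul]
    congr 1
    ext
    simp [← mul_assoc, hOre]

theorem eq_zero_of_forall_contract_eq_zero {D : Submodule ℂ Q} (hDC : D * C ≤ R.toSubmodule)
    (hCDC : C * D * C ≤ C) (h1 : (1 : Q) ∈ C * D) {x : BalancedTensor Q R C N}
    (hx : ∀ d (hd : d ∈ D), contract d (fun _ hy => hDC (Submodule.mul_mem_mul hd hy)) x = 0) :
    x = 0 := by
  have hCD : ∀ q ∈ C * D, ∀ y ∈ C, q * y ∈ C := fun q hq y hy =>
    hCDC (Submodule.mul_mem_mul hq hy)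
  suffices ∀ q (hq : q ∈ C * D), lmul q (hCD q hq) x = 0 by
    simpa [lmul_one] using this 1 h1
  intro _ hq
  induction hq using Submodule.mul_induction_on' with
  | mem_mul_mem c hc d hd =>
    rw [lmul_mul_eq_tmulRight_comp_contract ⟨c, hc⟩ fun y hy => hDC (Submodule.mul_mem_mul hd hy),
      AddMonoidHom.comp_apply, hx d hd, map_zero]
  | add q₁ hq₁ q₂ hq₂ h₁ h₂ =>
    rw [lmul_add (hCD q₁ hq₁) (hCD q₂ hq₂), AddMonoidHom.add_apply, h₁, h₂, add_zero]

section Torsion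

variable (T : Set Q) (hTR : T ⊆ R) (hTC : ∀ t ∈ T, ∀ x ∈ C, t * x ∈ C)

theorem exists_lmul_tmul_eq_zero
    (hOreC : ∀ t ∈ T, ∀ c ∈ C, ∃ t' ∈ T, ∃ c' ∈ C, c' * t = t' * c)
    {t₀ : Q} (ht₀ : t₀ ∈ T) (c : C) {n : N} (hn : (⟨t₀, hTR ht₀⟩ : R) • n = 0) :
    ∃ t, ∃ ht : t ∈ T, lmul t (hTC t ht) (tmul (R := R) c n) = 0 := by
  obtain ⟨t, ht, c', hc', hOre⟩ := hOreC t₀ ht₀ c c.2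
  refine ⟨t, ht, ?_⟩
  rw [lmul_tmul, tmul_eq_tmul_smul (c := ⟨c', hc'⟩) (r := ⟨t₀, hTR ht₀⟩) hOre.symm, hn,
    tmul_zero]

theorem exists_lmul_eq_zero_of_torsion (hT1 : 1 ∈ T) (hTmul : ∀ t ∈ T, ∀ t' ∈ T, t * t' ∈ T)
    (hOreC : ∀ t ∈ T, ∀ c ∈ C, ∃ t' ∈ T, ∃ c' ∈ C, c' * t = t' * c)
    (htor : ∀ n : N, ∃ t, ∃ ht : t ∈ T, (⟨t, hTR ht⟩ : R) • n = 0)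
    (x : BalancedTensor Q R C N) : ∃ t, ∃ ht : t ∈ T, lmul t (hTC t ht) x = 0 := by
  obtain ⟨z, rfl⟩ := QuotientAddGroup.mk_surjective x
  induction z using Finsupp.induction with
  | zero => exact ⟨1, hT1, by simp⟩
  | single_add p a f _ _ ih =>
    obtain ⟨t₂, ht₂, hf⟩ := ih
    obtain ⟨t₀, ht₀, hn⟩ := htor p.2
    obtain ⟨t₃, ht₃, hp⟩ := exists_lmul_tmul_eq_zero T hTR hTC hOreC ht₀
      ⟨t₂ * p.1, hTC t₂ ht₂ _ p.1.2⟩ hn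
    refine ⟨t₃ * t₂, hTmul _ ht₃ _ ht₂, ?_⟩
    rw [lmul_mul (hTC t₃ ht₃) (hTC t₂ ht₂), QuotientAddGroup.mk_add, mk_single, map_add,
      map_zsmul, AddMonoidHom.comp_apply, AddMonoidHom.comp_apply, lmul_tmul, hp, hf, map_zero,
      smul_zero, add_zero]

theorem eq_zero_of_lmul_eq_zero {D : Submodule ℂ Q}
    (hOre : ∀ t ∈ T, ∀ d ∈ D, ∃ t' ∈ T, ∃ d' ∈ D, d' * t = t' * d)
    (htf : ∀ n : N, ∀ t, ∀ ht : t ∈ T, (⟨t, hTR ht⟩ : R) • n = 0 → n = 0)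
    (hDC : D * C ≤ R.toSubmodule) (hCDC : C * D * C ≤ C) (h1 : (1 : Q) ∈ C * D)
    {t : Q} (ht : t ∈ T) {x : BalancedTensor Q R C N} (hx : lmul t (hTC t ht) x = 0) :
    x = 0 := by
  refine eq_zero_of_forall_contract_eq_zero hDC hCDC h1 fun d hd => ?_
  obtain ⟨t', ht', d', hd', hOre'⟩ := hOre t ht d hd
  refine htf _ t' ht' ?_
  have hD : ∀ d ∈ D, ∀ y ∈ C, d * y ∈ R := fun d hd y hy => hDC (Submodule.mul_mem_mul hd hy)
  have := DFunLike.congr_fun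
    (contract_comp_lmul (s := ⟨t', hTR ht'⟩) hOre' (hD d hd) (hD d' hd') (hTC t ht)) x
  simpa [hx] using this.symm

end Torsion

end

end BalancedTensor

open BalancedTensor in
theorem statement17_general {Q : Type*} [Ring Q] [Algebra ℂ Q]
    (R S : Subalgebra ℂ Q) (B C : Submodule ℂ Q)
    (hRB : R.toSubmodule * B ≤ B)
    (hinv1 : B * C = R.toSubmodule) (hinv2 : C * B = S.toSubmodule)
    (T : Set Q) (hT1 : (1 : Q) ∈ T) (hTmul : ∀ t ∈ T, ∀ t' ∈ T, t * t' ∈ T)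
    (hTR : T ⊆ (R : Set Q)) (hTS : T ⊆ (S : Set Q))
    (hOreC : ∀ t ∈ T, ∀ c, c ∈ C → ∃ t' ∈ T, ∃ c', c' ∈ C ∧ c' * t = t' * c)
    (hTC : ∀ t ∈ T, ∀ x, x ∈ C → t * x ∈ C)
    (hTB : ∀ t ∈ T, ∀ x, x ∈ B → t * x ∈ B)
    (N : Type*) [AddCommGroup N] [Module ↥R N]
    (M : Type*) [AddCommGroup M] [Module ↥S M] :
    -- (1)
    ((∀ x : N, ∃ t, ∃ ht : t ∈ T, (⟨t, hTR ht⟩ : ↥R) • x = 0) →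
      ∀ z : (↥C × N) →₀ ℤ, ∃ t, ∃ ht : t ∈ T,
        Finsupp.mapDomain
          (fun p : ↥C × N => ((⟨t * (p.1 : Q), hTC t ht _ p.1.2⟩ : ↥C), p.2)) z
          ∈ tensorRel Q R C N)
    -- (2)
    ∧ ((∀ m : M, ∀ t, ∀ ht : t ∈ T, (⟨t, hTS ht⟩ : ↥S) • m = 0 → m = 0) →
      ∀ z : (↥B × M) →₀ ℤ, ∀ t, ∀ ht : t ∈ T,
        Finsupp.mapDomain
          (fun p : ↥B × M => ((⟨t * (p.1 : Q), hTB t ht _ p.1.2⟩ : ↥B), p.2)) z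
          ∈ tensorRel Q S B M →
        z ∈ tensorRel Q S B M) := by
  refine ⟨fun htor z => ?_, fun htf z t ht hz => ?_⟩
  · obtain ⟨t, ht, hz⟩ := exists_lmul_eq_zero_of_torsion T hTR hTC hT1 hTmul hOreC htor
      (QuotientAddGroup.mk z)
    rw [lmul_mk, QuotientAddGroup.eq_zero_iff] at hz
    exact ⟨t, ht, hz⟩
  · have hBCB : B * C * B ≤ B := hinv1 ▸ hRB
    have h1 : (1 : Q) ∈ B * C := hinv1 ▸ R.one_mem
    rw [← QuotientAddGroup.eq_zero_iff]
    refine eq_zero_of_lmul_eq_zero T hTS hTB hOreC htf hinv2.le hBCB h1 ht ?_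
    rwa [lmul_mk, QuotientAddGroup.eq_zero_iff]

/-- [Mus, Lemma `easy`].  `R, S` are subrings of a ℂ-algebra `Q`, `B ⊆ Q` an
`(R,S)`-sub-bimodule and `C ⊆ Q` an `(S,R)`-sub-bimodule inducing inverse equivalences
`B ⊗_S − : S-mod → R-mod` and `C ⊗_R − : R-mod → S-mod` (for sub-bimodules of `Q`
this is the Morita condition `B·C = R`, `C·B = S`).  `T` is a multiplicatively closed
subset of both `R` and `S`, a left Ore set in `R`, and `C` satisfies the Ore condition
with respect to `T`.  Then:
(1) if the `R`-module `N` is `T`-torsion, so is the `S`-module `C ⊗_R N`;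
(2) if the `S`-module `M` is `T`-torsion-free, so is the `R`-module `B ⊗_S M`.
The element `t ∈ T` acts on `C ⊗ N` (resp. `B ⊗ M`) through `c ⊗ n ↦ (t c) ⊗ n`,
realized on the free abelian group by `Finsupp.mapDomain`; an element of the tensor
product, i.e. a class modulo `tensorRel`, is zero iff its representative lies in
`tensorRel`. -/
theorem statement17 {Q : Type*} [Ring Q] [Algebra ℂ Q]
    (R S : Subalgebra ℂ Q) (B C : Submodule ℂ Q)
    (hRB : R.toSubmodule * B ≤ B) (hBS : B * S.toSubmodule ≤ B)
    (hSC : S.toSubmodule * C ≤ C) (hCR : C * R.toSubmodule ≤ C)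
    (hinv1 : B * C = R.toSubmodule) (hinv2 : C * B = S.toSubmodule)
    (T : Set Q) (hT1 : (1 : Q) ∈ T) (hTmul : ∀ t ∈ T, ∀ t' ∈ T, t * t' ∈ T)
    (hTR : T ⊆ (R : Set Q)) (hTS : T ⊆ (S : Set Q))
    (hOreR : ∀ t ∈ T, ∀ r ∈ (R : Set Q), ∃ t' ∈ T, ∃ r' ∈ (R : Set Q), t' * r = r' * t)
    (hOreC : ∀ t ∈ T, ∀ c, c ∈ C → ∃ t' ∈ T, ∃ c', c' ∈ C ∧ c' * t = t' * c)
    (hTC : ∀ t ∈ T, ∀ x, x ∈ C → t * x ∈ C)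
    (hTB : ∀ t ∈ T, ∀ x, x ∈ B → t * x ∈ B)
    (N : Type*) [AddCommGroup N] [Module ↥R N]
    (M : Type*) [AddCommGroup M] [Module ↥S M] :
    -- (1)
    ((∀ x : N, ∃ t, ∃ ht : t ∈ T, (⟨t, hTR ht⟩ : ↥R) • x = 0) →
      ∀ z : (↥C × N) →₀ ℤ, ∃ t, ∃ ht : t ∈ T,
        Finsupp.mapDomain
          (fun p : ↥C × N => ((⟨t * (p.1 : Q), hTC t ht _ p.1.2⟩ : ↥C), p.2)) z
          ∈ tensorRel Q R C N)
    -- (2)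
    ∧ ((∀ m : M, ∀ t, ∀ ht : t ∈ T, (⟨t, hTS ht⟩ : ↥S) • m = 0 → m = 0) →
      ∀ z : (↥B × M) →₀ ℤ, ∀ t, ∀ ht : t ∈ T,
        Finsupp.mapDomain
          (fun p : ↥B × M => ((⟨t * (p.1 : Q), hTB t ht _ p.1.2⟩ : ↥B), p.2)) z
          ∈ tensorRel Q S B M →
        z ∈ tensorRel Q S B M) :=
  statement17_general R S B C hRB hinv1 hinv2 T hT1 hTmul hTR hTS hOreC hTC hTB N M
end
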